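/- arXiv:1402.0375 — 11 statements merged into one kernel-verified Lean document; each statement's English description precedes it below -/
import Mathlib

section
/- Let X be a metric space and S ⊆ X a resolving set, i.e. for all a, b ∈ X, if dist(a, x) = dist(b, x) for every x ∈ S, then a = b. If f and g are bijective isometries of X with f(S) = S and g(S) = S, and f(x) = g(x) for every x ∈ S, then f = g. -/
/-- If `S` is a resolving subset of a metric space `X`, then any two bijective
isometries of `X` that preserve `S` and agree on `S` are equal. -/
theorem stmt_0 {X : Type*} [MetricSpace X] (S : Set X)
    (hres : ∀ a b : X, (∀ x ∈ S, dist a x = dist b x) → a = b)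
    (f g : X ≃ᵢ X) (hf : ⇑f '' S = S) (hg : ⇑g '' S = S)
    (hfg : ∀ x ∈ S, f x = g x) : f = g := by
  ext a
  apply hres
  intro x hx
  rw [← hf] at hx
  obtain ⟨s, hs, rfl⟩ := hx
  rw [f.dist_eq, hfg s hs, g.dist_eq]
end

section
/- Let X be a metric space and S ⊆ X a finite resolving set. Then the group Sym(S) of all bijective isometries f : X → X with f(S) = S is finite. -/
/-- If `S` is a finite resolving subset of a metric space `X`, then the group
`Sym(S)` of bijective isometries of `X` preserving `S` is finite. -/
theorem stmt_1 {X : Type*} [MetricSpace X] (S : Set X) (hSfin : S.Finite)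
    (hres : ∀ a b : X, (∀ x ∈ S, dist a x = dist b x) → a = b) :
    {f : X ≃ᵢ X | ⇑f '' S = S}.Finite := by
  have hS : Finite S := hSfin.to_subtype
  rw [← Set.finite_coe_iff]
  -- inject into S → S
  have key : ∀ (f : X ≃ᵢ X), ⇑f '' S = S → ∀ s ∈ S, f s ∈ S := by
    intro f hf s hs
    rw [← hf]; exact ⟨s, hs, rfl⟩
  let φ : {f : X ≃ᵢ X | ⇑f '' S = S} → (S → S) :=
    fun f s => ⟨f.1 s, key f.1 f.2 s s.2⟩
  have hinj : Function.Injective φ := by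
    intro f g hfg
    have hfg' : ∀ s ∈ S, f.1 s = g.1 s := by
      intro s hs
      have := congrFun hfg ⟨s, hs⟩
      exact Subtype.ext_iff.mp this
    -- symm agrees on S
    have hsymm : ∀ x ∈ S, f.1.symm x = g.1.symm x := by
      intro x hx
      have hx' : x ∈ ⇑f.1 '' S := f.2.symm ▸ hx
      obtain ⟨y, hy, rfl⟩ := hx'
      rw [IsometryEquiv.symm_apply_apply, hfg' y hy, IsometryEquiv.symm_apply_apply]
    apply Subtype.ext
    ext a
    apply hres
    intro x hx
    have h1 : dist (f.1 a) x = dist a (f.1.symm x) := by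
      conv_lhs => rw [← f.1.apply_symm_apply x]
      exact f.1.isometry.dist_eq a (f.1.symm x)
    have h2 : dist (g.1 a) x = dist a (g.1.symm x) := by
      conv_lhs => rw [← g.1.apply_symm_apply x]
      exact g.1.isometry.dist_eq a (g.1.symm x)
    rw [h1, h2, hsymm x hx]
  exact Finite.of_injective φ hinj
end

section
/- Let X be a metric space and S ⊆ X a nonempty subset. Assume that the action of Sym(S) on S is primitive (i.e. transitive, and every Sym(S)-invariant block of the action on S is trivial), and that no point of X is fixed by every element of Sym(S). Then S is highly symmetric: Sym(S) acts transitively on S and for every x ∈ S and y ∈ X, if Stab(x) ⊆ Stab(y) then Stab(x) = Stab(y). -/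
private lemma symm_img {X : Type*} [MetricSpace X] {S : Set X} (f : X ≃ᵢ X)
    (h : ⇑f '' S = S) : ⇑f.symm '' S = S := by
  conv_lhs => rw [← h]
  rw [← Set.image_comp, f.symm_comp_self, Set.image_id]

/-- If the action of `Sym(S)` on a nonempty set `S` is primitive (transitive with only
trivial invariant blocks) and `Sym(S)` has no common fixed point in `X`, then `S` is
highly symmetric. -/
theorem stmt_2 {X : Type*} [MetricSpace X] (S : Set X) (hne : S.Nonempty)
    (htrans : ∀ x ∈ S, ∀ y ∈ S, ∃ f : X ≃ᵢ X, ⇑f '' S = S ∧ f x = y)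
    (hblock : ∀ B : Set X, B ⊆ S →
      (∀ f : X ≃ᵢ X, ⇑f '' S = S → ⇑f '' B = B ∨ Disjoint (⇑f '' B) B) →
      B = ∅ ∨ (∃ x, B = {x}) ∨ B = S)
    (hnofix : ¬ ∃ y : X, ∀ f : X ≃ᵢ X, ⇑f '' S = S → f y = y) :
    (∀ x ∈ S, ∀ y ∈ S, ∃ f : X ≃ᵢ X, ⇑f '' S = S ∧ f x = y) ∧
    (∀ x ∈ S, ∀ y : X,
      {f : X ≃ᵢ X | ⇑f '' S = S ∧ f x = x} ⊆ {f : X ≃ᵢ X | ⇑f '' S = S ∧ f y = y} →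
      {f : X ≃ᵢ X | ⇑f '' S = S ∧ f x = x} = {f : X ≃ᵢ X | ⇑f '' S = S ∧ f y = y}) := by
  refine ⟨htrans, ?_⟩
  intro x hx y hsub
  -- B : orbit of x under the stabilizer of y
  set B : Set X := {z : X | ∃ f : X ≃ᵢ X, ⇑f '' S = S ∧ f y = y ∧ f x = z} with hB
  have hxB : x ∈ B := ⟨IsometryEquiv.refl X, by rw [show ⇑(IsometryEquiv.refl X) = id from rfl, Set.image_id], rfl, rfl⟩
  have hBS : B ⊆ S := by
    rintro z ⟨f, hfS, -, rfl⟩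
    rw [← hfS]; exact ⟨x, hx, rfl⟩
  -- B is a block
  have hblk : ∀ g : X ≃ᵢ X, ⇑g '' S = S → ⇑g '' B = B ∨ Disjoint (⇑g '' B) B := by
    intro g hgS
    by_cases hdis : Disjoint (⇑g '' B) B
    · exact Or.inr hdis
    left
    obtain ⟨z, hz1, hz2⟩ := Set.not_disjoint_iff.mp hdis
    obtain ⟨w, ⟨f₁, hf₁S, hf₁y, hf₁x⟩, rfl⟩ := hz1
    obtain ⟨f₂, hf₂S, hf₂y, hf₂x⟩ := hz2
    -- g fixes y
    have hgy : g y = y := by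
      set h : X ≃ᵢ X := (f₁.trans g).trans f₂.symm with hh
      have hhS : ⇑h '' S = S := by
        have : ⇑h = ⇑f₂.symm ∘ ⇑g ∘ ⇑f₁ := rfl
        rw [this, Set.image_comp, Set.image_comp, hf₁S, hgS, symm_img f₂ hf₂S]
      have hhx : h x = x := by
        have : h x = f₂.symm (g (f₁ x)) := rfl
        rw [this, hf₁x, ← hf₂x, f₂.symm_apply_apply]
      have := hsub ⟨hhS, hhx⟩
      have hhy : f₂.symm (g (f₁ y)) = y := this.2
      rw [hf₁y] at hhy
      have := congrArg f₂ hhy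
      rwa [f₂.apply_symm_apply, hf₂y] at this
    ext z
    constructor
    · rintro ⟨w, ⟨f, hfS, hfy, hfx⟩, rfl⟩
      refine ⟨f.trans g, ?_, ?_, ?_⟩
      · show ⇑g ∘ ⇑f '' S = S
        rw [Set.image_comp, hfS, hgS]
      · show g (f y) = y
        rw [hfy, hgy]
      · show g (f x) = g w
        exact congrArg g hfx
    · rintro ⟨f, hfS, hfy, hfx⟩
      refine ⟨g.symm (f x), ⟨f.trans g.symm, ?_, ?_, rfl⟩, by rw [g.apply_symm_apply]; exact hfx⟩
      · show ⇑g.symm ∘ ⇑f '' S = S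
        rw [Set.image_comp, hfS, symm_img g hgS]
      · show g.symm (f y) = y
        rw [hfy, IsometryEquiv.symm_apply_eq]
        exact hgy.symm
  -- analyze the block
  rcases hblock B hBS hblk with hB0 | ⟨w, hBw⟩ | hBSe
  · exact absurd (hB0 ▸ hxB) (Set.notMem_empty x)
  · -- B = {x}, so Stab(y) ⊆ Stab(x)
    have hwx : w = x := by
      have := hBw ▸ hxB; exact (Set.mem_singleton_iff.mp this).symm
    apply Set.Subset.antisymm hsub
    rintro f ⟨hfS, hfy⟩
    have : f x ∈ B := ⟨f, hfS, hfy, rfl⟩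
    rw [hBw, hwx] at this
    exact ⟨hfS, this⟩
  · -- B = S : every element of Sym(S) fixes y, contradiction
    exfalso
    apply hnofix
    refine ⟨y, fun g hgS => ?_⟩
    have hgx : g x ∈ B := by
      rw [hBSe, ← hgS]; exact ⟨x, hx, rfl⟩
    obtain ⟨f, hfS, hfy, hfx⟩ := hgx
    set h : X ≃ᵢ X := g.trans f.symm with hh
    have hhS : ⇑h '' S = S := by
      have : ⇑h = ⇑f.symm ∘ ⇑g := rfl
      rw [this, Set.image_comp, hgS, symm_img f hfS]
    have hhx : h x = x := by
      have : h x = f.symm (g x) := rfl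
      rw [this, ← hfx, f.symm_apply_apply]
    have hhy : f.symm (g y) = y := (hsub ⟨hhS, hhx⟩).2
    have := congrArg f hhy
    rwa [f.apply_symm_apply, hfy] at this
end

section
/- Let X be a metric space and S ⊆ X a nonempty subset. Assume S is super-symmetric, i.e. for all x₁, x₂, y₁, y₂ ∈ S with x₁ ≠ x₂ and y₁ ≠ y₂ there exists f ∈ Sym(S) with f(x₁) = y₁ and f(x₂) = y₂ (the action of Sym(S) on S is doubly transitive), and assume that no point of X is fixed by every element of Sym(S). Then S is highly symmetric: Sym(S) acts transitively on S and for every x ∈ S and y ∈ X, if Stab(x) ⊆ Stab(y) then Stab(x) = Stab(y). -/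
/-- If a nonempty set `S` is super-symmetric (the action of `Sym(S)` on `S` is doubly
transitive) and `Sym(S)` has no common fixed point in `X`, then `S` is highly symmetric. -/
theorem stmt_3 {X : Type*} [MetricSpace X] (S : Set X) (hne : S.Nonempty)
    (hdt : ∀ x₁ ∈ S, ∀ x₂ ∈ S, ∀ y₁ ∈ S, ∀ y₂ ∈ S, x₁ ≠ x₂ → y₁ ≠ y₂ →
      ∃ f : X ≃ᵢ X, ⇑f '' S = S ∧ f x₁ = y₁ ∧ f x₂ = y₂)
    (hnofix : ¬ ∃ y : X, ∀ f : X ≃ᵢ X, ⇑f '' S = S → f y = y) :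
    (∀ x ∈ S, ∀ y ∈ S, ∃ f : X ≃ᵢ X, ⇑f '' S = S ∧ f x = y) ∧
    (∀ x ∈ S, ∀ y : X,
      {f : X ≃ᵢ X | ⇑f '' S = S ∧ f x = x} ⊆ {f : X ≃ᵢ X | ⇑f '' S = S ∧ f y = y} →
      {f : X ≃ᵢ X | ⇑f '' S = S ∧ f x = x} = {f : X ≃ᵢ X | ⇑f '' S = S ∧ f y = y}) := by
  -- every point of S has another point of S distinct from it
  have hexists : ∀ x ∈ S, ∃ a ∈ S, a ≠ x := by
    intro x hx
    by_contra h
    push_neg at h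
    exact hnofix ⟨x, fun f hf => h (f x) (hf ▸ Set.mem_image_of_mem f hx)⟩
  constructor
  · intro x hx y hy
    obtain ⟨a, ha, hax⟩ := hexists x hx
    obtain ⟨b, hb, hby⟩ := hexists y hy
    obtain ⟨f, hfS, hf1, _⟩ := hdt x hx a ha y hy b hb (Ne.symm hax) (Ne.symm hby)
    exact ⟨f, hfS, hf1⟩
  · intro x hx y hsub
    apply Set.Subset.antisymm hsub
    rintro f ⟨hfS, hfy⟩
    refine ⟨hfS, ?_⟩
    by_contra hfx
    -- then y is a common fixed point of Sym(S)
    apply hnofix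
    refine ⟨y, fun g hgS => ?_⟩
    have hax : f x ∈ S := hfS ▸ Set.mem_image_of_mem f hx
    have hbx : g x ∈ S := hgS ▸ Set.mem_image_of_mem g hx
    by_cases hb : g x = x
    · exact (hsub ⟨hgS, hb⟩).2
    · obtain ⟨s, hsS, hs1, hs2⟩ := hdt x hx (f x) hax x hx (g x) hbx
        (Ne.symm hfx) (Ne.symm hb)
    -- s ∈ Stab(x) hence fixes y
      have hsy : s y = y := (hsub ⟨hsS, hs1⟩).2
      -- consider k = g⁻¹ ∘ s ∘ f, it fixes x
      set k := (f.trans s).trans g.symm with hk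
      have hkS : ⇑k '' S = S := by
        have h1 : ⇑(f.trans s) '' S = S := by
          show (⇑s ∘ ⇑f) '' S = S
          rw [Set.image_comp, hfS, hsS]
        have h2 : ⇑g.symm '' S = S := by
          conv_lhs => rw [← hgS, ← Set.image_comp]
          simp
        show (⇑g.symm ∘ ⇑(f.trans s)) '' S = S
        rw [Set.image_comp, h1, h2]
      have hkx : k x = x := by
        show g.symm (s (f x)) = x
        rw [hs2]
        exact g.symm_apply_apply x
      have hky : k y = y := (hsub ⟨hkS, hkx⟩).2
      have : g.symm (s (f y)) = y := hky
      rw [hfy, hsy] at this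
      calc g y = g (g.symm y) := by rw [this]
        _ = y := g.apply_symm_apply y
end

section
/- Let X be a metric space and S ⊆ X a nonempty symmetric set, i.e. Sym(S) acts transitively on S. Then S is highly symmetric (for every x ∈ S and y ∈ X, Stab(x) ⊆ Stab(y) implies Stab(x) = Stab(y)) if and only if every Sym(S)-equivariant map κ : S → X, i.e. every map satisfying κ(f(x)) = f(κ(x)) for all f ∈ Sym(S) and x ∈ S, is injective. -/
/-- A nonempty symmetric set `S` in a metric space is highly symmetric if and only if
every `Sym(S)`-equivariant map `κ : S → X` is injective. -/
theorem stmt_4 {X : Type*} [MetricSpace X] (S : Set X) (hne : S.Nonempty)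
    (htrans : ∀ x ∈ S, ∀ y ∈ S, ∃ f : X ≃ᵢ X, ⇑f '' S = S ∧ f x = y) :
    (∀ x ∈ S, ∀ y : X,
      {f : X ≃ᵢ X | ⇑f '' S = S ∧ f x = x} ⊆ {f : X ≃ᵢ X | ⇑f '' S = S ∧ f y = y} →
      {f : X ≃ᵢ X | ⇑f '' S = S ∧ f x = x} = {f : X ≃ᵢ X | ⇑f '' S = S ∧ f y = y})
    ↔
    (∀ κ : X → X, (∀ f : X ≃ᵢ X, ⇑f '' S = S → ∀ x ∈ S, κ (f x) = f (κ x)) →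
      Set.InjOn κ S) := by
  classical
  have hsymmS : ∀ g : X ≃ᵢ X, ⇑g '' S = S → ⇑g.symm '' S = S := by
    intro g hg
    conv_lhs => rw [← hg]
    rw [← Set.image_comp]
    simp
  have htransS : ∀ f g : X ≃ᵢ X, ⇑f '' S = S → ⇑g '' S = S → ⇑(f.trans g) '' S = S := by
    intro f g hf hg
    have hc : ⇑(f.trans g) = ⇑g ∘ ⇑f := rfl
    rw [hc, Set.image_comp, hf, hg]
  constructor
  · intro hhs κ hequiv x hx y hy hxy
    obtain ⟨f, hfS, hfx⟩ := htrans x hx y hy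
    have hsub : {g : X ≃ᵢ X | ⇑g '' S = S ∧ g x = x} ⊆
        {g : X ≃ᵢ X | ⇑g '' S = S ∧ g (κ x) = κ x} := by
      rintro g ⟨hgS, hgx⟩
      refine ⟨hgS, ?_⟩
      have h := hequiv g hgS x hx
      rw [hgx] at h
      exact h.symm
    have heq := hhs x hx (κ x) hsub
    have hfk : f (κ x) = κ x := by
      have h := hequiv f hfS x hx
      rw [hfx, ← hxy] at h
      exact h.symm
    have hmem : f ∈ {g : X ≃ᵢ X | ⇑g '' S = S ∧ g x = x} := by
      rw [heq]; exact ⟨hfS, hfk⟩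
    exact hmem.2.symm.trans hfx
  · intro hinj x hx y hsub
    apply Set.Subset.antisymm hsub
    -- define the equivariant map κ
    set κ : X → X := fun s => if h : s ∈ S then (htrans x hx s h).choose y else s with hκ
    have hwd : ∀ f g : X ≃ᵢ X, ⇑f '' S = S → ⇑g '' S = S → f x = g x → f y = g y := by
      intro f g hf hg hfg
      have hm : f.trans g.symm ∈ {h : X ≃ᵢ X | ⇑h '' S = S ∧ h x = x} := by
        refine ⟨htransS f g.symm hf (hsymmS g hg), ?_⟩
        simp [hfg]
      have := hsub hm
      have h2 : g.symm (f y) = y := this.2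
      have := congrArg g h2
      simpa using this
    have hκeq : ∀ f : X ≃ᵢ X, ⇑f '' S = S → ∀ s ∈ S, κ (f s) = f (κ s) := by
      intro f hf s hs
      have hfs : f s ∈ S := by rw [← hf]; exact Set.mem_image_of_mem f hs
      simp only [hκ, dif_pos hs, dif_pos hfs]
      obtain ⟨h1S, h1x⟩ := (htrans x hx (f s) hfs).choose_spec
      obtain ⟨h2S, h2x⟩ := (htrans x hx s hs).choose_spec
      have := hwd (htrans x hx (f s) hfs).choose ((htrans x hx s hs).choose.trans f)
        h1S (htransS _ f h2S hf) (by simp [h1x, h2x])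
      simpa using this
    have hinjκ := hinj κ hκeq
    have hκx : κ x = y := by
      obtain ⟨hcS, hcx⟩ := (htrans x hx x hx).choose_spec
      have := hsub ⟨hcS, hcx⟩
      simp only [hκ, dif_pos hx]
      exact this.2
    rintro g ⟨hgS, hgy⟩
    refine ⟨hgS, ?_⟩
    have hgx : g x ∈ S := by rw [← hgS]; exact Set.mem_image_of_mem g hx
    have h1 : κ (g x) = κ x := by
      rw [hκeq g hgS x hx, hκx, hgy]
    exact hinjκ hgx hx h1
end

section
/- Let σ_1, …, σ_k be a normalized rank-1 POVM on ℂ^d. Then for every density matrix ρ, ln(k/d) ≤ Σ_{j=1}^k η((d/k)·Re tr(σ_j ρ)) ≤ ln k. -/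
/-!
The numbers `p j = (d/k) Re tr(σ_j ρ)` form a probability vector: each `σ_j` is a Hermitian
projection, so `tr(σ_j ρ) = tr(σ_j ρ σ_j)` and `tr((1 - σ_j) ρ)` are traces of positive
semidefinite matrices, giving `0 ≤ p j ≤ d/k`, while `∑ σ_j = (k/d)·1` gives `∑ p j = 1`.
The upper bound is then Jensen's inequality for the concave function `η`, and the lower bound
comes from `η(p) = p · (-log p) ≥ p · (-log (d/k))`.
-/

open scoped ComplexOrder
open Matrix

namespace Real

theorem mul_neg_log_le_negMulLog {x c : ℝ} (hx : 0 ≤ x) (hxc : x ≤ c) :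
    x * -log c ≤ negMulLog x := by
  rcases hx.eq_or_lt with rfl | hx
  · simp
  · rw [negMulLog, neg_mul, ← mul_neg]
    exact mul_le_mul_of_nonneg_left (neg_le_neg (log_le_log hx hxc)) hx.le

theorem neg_log_le_sum_negMulLog {ι : Type*} [Fintype ι] {p : ι → ℝ} {c : ℝ}
    (hp : ∀ i, 0 ≤ p i) (hsum : ∑ i, p i = 1) (hc : ∀ i, p i ≤ c) :
    -log c ≤ ∑ i, negMulLog (p i) :=
  calc -log c = ∑ i, p i * -log c := by rw [← Finset.sum_mul, hsum, one_mul]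
    _ ≤ ∑ i, negMulLog (p i) :=
      Finset.sum_le_sum fun i _ ↦ mul_neg_log_le_negMulLog (hp i) (hc i)

theorem sum_negMulLog_le_log_card {ι : Type*} [Fintype ι] {p : ι → ℝ}
    (hp : ∀ i, 0 ≤ p i) (hsum : ∑ i, p i = 1) :
    ∑ i, negMulLog (p i) ≤ log (Fintype.card ι) := by
  have hcard : (0 : ℝ) < Fintype.card ι := by
    have : Nonempty ι := by
      by_contra h
      simp [not_nonempty_iff.mp h] at hsum
    exact_mod_cast Fintype.card_pos
  have jensen := concaveOn_negMulLog.le_map_sum (t := Finset.univ)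
    (w := fun _ ↦ (Fintype.card ι : ℝ)⁻¹) (p := p) (fun _ _ ↦ by positivity)
    (by simp [hcard.ne']) (fun i _ ↦ hp i)
  simp only [smul_eq_mul, ← Finset.mul_sum, hsum, mul_one, negMulLog, log_inv] at jensen
  have := mul_le_mul_of_nonneg_left jensen hcard.le
  rwa [← mul_assoc, mul_inv_cancel₀ hcard.ne', one_mul, neg_mul_neg, ← mul_assoc,
    mul_inv_cancel₀ hcard.ne', one_mul] at this

end Real

namespace Matrix.PosSemidef

variable {n R : Type*} [Fintype n] [CommRing R] [PartialOrder R] [StarRing R] [AddLeftMono R]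
  {ρ P : Matrix n n R}

theorem trace_mul_nonneg_of_isIdempotentElem (hρ : ρ.PosSemidef) (hP : P.IsHermitian)
    (hP' : IsIdempotentElem P) : 0 ≤ (P * ρ).trace := by
  have : (P * ρ).trace = (Pᴴ * ρ * P).trace := by
    rw [hP.eq, mul_assoc, trace_mul_comm P (ρ * P), mul_assoc, hP'.eq, trace_mul_comm]
  rw [this]
  exact (hρ.conjTranspose_mul_mul_same P).trace_nonneg

theorem trace_mul_le_of_isIdempotentElem [DecidableEq n] (hρ : ρ.PosSemidef)
    (hP : P.IsHermitian) (hP' : IsIdempotentElem P) : (P * ρ).trace ≤ ρ.trace := by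
  have := hρ.trace_mul_nonneg_of_isIdempotentElem (isHermitian_one.sub hP) hP'.one_sub
  rwa [sub_mul, one_mul, trace_sub, sub_nonneg] at this

end Matrix.PosSemidef

theorem stmt_5_general {d k : ℕ} (hd : 0 < d) (hk : 0 < k)
    (σ : Fin k → Matrix (Fin d) (Fin d) ℂ)
    (hherm : ∀ j, (σ j).IsHermitian)
    (hproj : ∀ j, σ j * σ j = σ j)
    (hsum : ∑ j, σ j = ((k : ℂ) / (d : ℂ)) • 1)
    (ρ : Matrix (Fin d) (Fin d) ℂ)
    (hρ : ρ.PosSemidef) (hρtr : ρ.trace = 1) :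
    Real.log ((k : ℝ) / d) ≤
      ∑ j, Real.negMulLog (((d : ℝ) / k) * ((σ j * ρ).trace).re) ∧
    ∑ j, Real.negMulLog (((d : ℝ) / k) * ((σ j * ρ).trace).re) ≤ Real.log (k : ℝ) := by
  have hdk : (0 : ℝ) < d / k := by positivity
  have hp_nonneg (j : Fin k) : 0 ≤ (d / k : ℝ) * ((σ j * ρ).trace).re :=
    mul_nonneg hdk.le <| Complex.nonneg_iff.mp
      (hρ.trace_mul_nonneg_of_isIdempotentElem (hherm j) (hproj j)) |>.1
  have hp_le (j : Fin k) : (d / k : ℝ) * ((σ j * ρ).trace).re ≤ d / k := by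
    refine mul_le_of_le_one_right hdk.le ?_
    simpa [hρtr] using
      Complex.re_le_re (hρ.trace_mul_le_of_isIdempotentElem (hherm j) (hproj j))
  have hp_sum : ∑ j, (d / k : ℝ) * ((σ j * ρ).trace).re = 1 := by
    have : ∑ j, (σ j * ρ).trace = (k / d : ℝ) := by
      rw [← trace_sum, ← Finset.sum_mul, hsum, smul_mul, one_mul, trace_smul, hρtr]
      push_cast
      ring
    rw [← Finset.mul_sum, ← Complex.re_sum, this, Complex.ofReal_re]
    field_simp
  constructor
  · simpa [← Real.log_inv] using Real.neg_log_le_sum_negMulLog hp_nonneg hp_sum hp_le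
  · simpa using Real.sum_negMulLog_le_log_card hp_nonneg hp_sum

/-- For a normalized rank-1 POVM `(d/k)·σ_j` on `ℂ^d` and any density matrix `ρ`,
the entropy of measurement satisfies `ln(k/d) ≤ H(ρ) ≤ ln k`. -/
theorem stmt_5 {d k : ℕ} (hd : 0 < d) (hk : 0 < k)
    (σ : Fin k → Matrix (Fin d) (Fin d) ℂ)
    (hherm : ∀ j, (σ j).IsHermitian)
    (hproj : ∀ j, σ j * σ j = σ j)
    (htr : ∀ j, (σ j).trace = 1)
    (hsum : ∑ j, σ j = ((k : ℂ) / (d : ℂ)) • 1)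
    (ρ : Matrix (Fin d) (Fin d) ℂ)
    (hρ : ρ.PosSemidef) (hρtr : ρ.trace = 1) :
    Real.log ((k : ℝ) / d) ≤
      ∑ j, Real.negMulLog (((d : ℝ) / k) * ((σ j * ρ).trace).re) ∧
    ∑ j, Real.negMulLog (((d : ℝ) / k) * ((σ j * ρ).trace).re) ≤ Real.log (k : ℝ) :=
  stmt_5_general hd hk σ hherm hproj hsum ρ hρ hρtr
end

section
/- Let σ_1, …, σ_k be a normalized rank-1 POVM on ℂ^d and let ρ be a density matrix with eigenvalues λ_1, …, λ_d (listed with multiplicity). Then Σ_{i=1}^d η(λ_i) + ln(k/d) ≤ Σ_{j=1}^k η((d/k)·Re tr(σ_j ρ)); that is, the entropy of measurement is bounded below by the von Neumann entropy of ρ plus ln(k/d). -/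
/-!
Write `uᵢ` for an orthonormal eigenbasis of `ρ` with eigenvalues `λᵢ` and put
`c j i = ⟪uᵢ, σⱼ uᵢ⟫ ≥ 0`. Each row of `c` sums to `tr σⱼ = 1`, each column to `k / d`, and
`tr (σⱼ ρ) = ∑ i, c j i * λᵢ`. Jensen's inequality for the concave `η` along each row, summed
over `j`, gives `(k / d) * ∑ η(λᵢ) ≤ ∑ⱼ η(tr (σⱼ ρ))`; rescaling by `d / k` via
`η(a b) = b η(a) + a η(b)` turns the factor `k / d` into the additive `log (k / d)`.
-/

open scoped ComplexOrder
open Matrix Real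

section Jensen

variable {ι κ : Type*} [Fintype ι] [Fintype κ]

theorem mul_sum_negMulLog_le_sum_negMulLog_sum_mul {c : κ → ι → ℝ} {s : ℝ} {x : ι → ℝ}
    (hc : ∀ j i, 0 ≤ c j i) (hrow : ∀ j, ∑ i, c j i = 1) (hcol : ∀ i, ∑ j, c j i = s)
    (hx : ∀ i, 0 ≤ x i) :
    s * ∑ i, negMulLog (x i) ≤ ∑ j, negMulLog (∑ i, c j i * x i) :=
  calc s * ∑ i, negMulLog (x i) = ∑ j, ∑ i, c j i * negMulLog (x i) := by
        simp_rw [Finset.sum_comm (γ := κ), ← Finset.sum_mul, hcol, Finset.mul_sum]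
    _ ≤ ∑ j, negMulLog (∑ i, c j i * x i) := Finset.sum_le_sum fun j _ => by
        simpa using concaveOn_negMulLog.le_map_sum (fun i _ => hc j i) (hrow j)
          (fun i _ => Set.mem_Ici.mpr (hx i))

theorem sum_negMulLog_inv_mul {q : κ → ℝ} {s : ℝ} (hs : s ≠ 0) (hq : ∑ j, q j = s) :
    ∑ j, negMulLog (s⁻¹ * q j) = log s + s⁻¹ * ∑ j, negMulLog (q j) := by
  simp_rw [negMulLog_mul, Finset.sum_add_distrib, ← Finset.sum_mul, ← Finset.mul_sum, hq,
    negMulLog, log_inv]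
  field_simp

end Jensen

theorem Matrix.IsHermitian.posSemidef_of_isIdempotentElem {n R : Type*} [Fintype n] [Ring R]
    [PartialOrder R] [StarRing R] [StarOrderedRing R] {P : Matrix n n R} (hP : P.IsHermitian)
    (hPP : IsIdempotentElem P) : P.PosSemidef := by
  simpa [hP.eq, hPP.eq] using posSemidef_conjTranspose_mul_self P

namespace Matrix.IsHermitian

variable {𝕜 n : Type*} [RCLike 𝕜] [Fintype n] [DecidableEq n] {ρ : Matrix n n 𝕜}
  (hρ : ρ.IsHermitian)

noncomputable def eigenDiag (A : Matrix n n 𝕜) : n → 𝕜 :=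
  (star (hρ.eigenvectorUnitary : Matrix n n 𝕜) * A * (hρ.eigenvectorUnitary : Matrix n n 𝕜)).diag

theorem sum_eigenDiag (A : Matrix n n 𝕜) : ∑ i, hρ.eigenDiag A i = A.trace := by
  change (star (hρ.eigenvectorUnitary : Matrix n n 𝕜) * A * hρ.eigenvectorUnitary).trace = _
  rw [Matrix.mul_assoc, trace_mul_comm, Matrix.mul_assoc,
    Unitary.mul_star_self_of_mem hρ.eigenvectorUnitary.2, Matrix.mul_one]

theorem trace_mul_eq_sum_eigenDiag_mul (A : Matrix n n 𝕜) :
    (A * ρ).trace = ∑ i, hρ.eigenDiag A i * hρ.eigenvalues i := by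
  set U : Matrix n n 𝕜 := (hρ.eigenvectorUnitary : Matrix n n 𝕜)
  have hU : U * star U = 1 := Unitary.mul_star_self_of_mem hρ.eigenvectorUnitary.2
  have hdiag : star U * ρ * U = diagonal (fun i => (hρ.eigenvalues i : 𝕜)) := by
    simpa [Function.comp_def] using hρ.conjStarAlgAut_star_eigenvectorUnitary
  calc (A * ρ).trace = (star U * (A * ρ) * U).trace := (hρ.sum_eigenDiag _).symm
    _ = (star U * A * U * (star U * ρ * U)).trace := by
        simp only [← Matrix.mul_assoc]
        rw [Matrix.mul_assoc (star U * A) U, hU, Matrix.mul_one]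
    _ = _ := by
        rw [hdiag, trace]
        simp [eigenDiag, U]

theorem eigenDiag_sum {ι : Type*} (s : Finset ι) (A : ι → Matrix n n 𝕜) :
    hρ.eigenDiag (∑ j ∈ s, A j) = ∑ j ∈ s, hρ.eigenDiag (A j) := by
  ext i
  simp [eigenDiag, Finset.mul_sum, Finset.sum_mul, Matrix.sum_apply]

theorem eigenDiag_smul_one (c : 𝕜) : hρ.eigenDiag (c • 1) = fun _ => c := by
  ext i
  simp [eigenDiag]

theorem eigenDiag_nonneg {A : Matrix n n 𝕜} (hA : A.PosSemidef) (i : n) :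
    0 ≤ hρ.eigenDiag A i := by
  simpa [eigenDiag, star_eq_conjTranspose] using
    (hA.conjTranspose_mul_mul_same (hρ.eigenvectorUnitary : Matrix n n 𝕜)).diag_nonneg (i := i)

end Matrix.IsHermitian

/-- For a normalized rank-1 POVM on `ℂ^d` and a density matrix `ρ`, the entropy of
measurement is bounded below by the von Neumann entropy of `ρ` plus `ln(k/d)`. -/
theorem stmt_8 {d k : ℕ} (hd : 0 < d) (hk : 0 < k)
    (σ : Fin k → Matrix (Fin d) (Fin d) ℂ)
    (hherm : ∀ j, (σ j).IsHermitian)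
    (hproj : ∀ j, σ j * σ j = σ j)
    (htr : ∀ j, (σ j).trace = 1)
    (hsum : ∑ j, σ j = ((k : ℂ) / (d : ℂ)) • 1)
    (ρ : Matrix (Fin d) (Fin d) ℂ)
    (hρ : ρ.PosSemidef) (hρtr : ρ.trace = 1) :
    ∑ i, Real.negMulLog (hρ.1.eigenvalues i) + Real.log ((k : ℝ) / d) ≤
      ∑ j, Real.negMulLog (((d : ℝ) / k) * ((σ j * ρ).trace).re) := by
  set s : ℝ := k / d
  have hs : 0 < s := by positivity
  set c : Fin k → Fin d → ℝ := fun j i => (hρ.1.eigenDiag (σ j) i).re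
  have hc : ∀ j i, 0 ≤ c j i := fun j i => (Complex.nonneg_iff.mp
    (hρ.1.eigenDiag_nonneg ((hherm j).posSemidef_of_isIdempotentElem (hproj j)) i)).1
  have hrow : ∀ j, ∑ i, c j i = 1 := fun j => by
    simp [c, ← Complex.re_sum, hρ.1.sum_eigenDiag, htr j]
  have hcol : ∀ i, ∑ j, c j i = s := fun i => by
    have hdiag := congrFun (hρ.1.eigenDiag_sum Finset.univ σ) i
    rw [hsum, hρ.1.eigenDiag_smul_one, Finset.sum_apply] at hdiag
    simp [c, ← Complex.re_sum, ← hdiag, s]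
  have hq : ∀ j, ((σ j * ρ).trace).re = ∑ i, c j i * hρ.1.eigenvalues i := fun j => by
    simp [hρ.1.trace_mul_eq_sum_eigenDiag_mul, Complex.re_sum, c]
  have hρ_eig_sum : ∑ i, hρ.1.eigenvalues i = 1 := by
    simpa using congrArg Complex.re (hρ.1.trace_eq_sum_eigenvalues.symm.trans hρtr)
  have hqsum : ∑ j, ∑ i, c j i * hρ.1.eigenvalues i = s := by
    rw [Finset.sum_comm]
    simp_rw [← Finset.sum_mul, hcol, ← Finset.mul_sum, hρ_eig_sum, mul_one]
  have hjensen := mul_sum_negMulLog_le_sum_negMulLog_sum_mul hc hrow hcol hρ.eigenvalues_nonneg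
  simp_rw [hq, show (d : ℝ) / k = s⁻¹ from (inv_div _ _).symm]
  rw [sum_negMulLog_inv_mul hs.ne' hqsum]
  linarith [(le_inv_mul_iff₀ hs).mpr hjensen]
end

section
/- Let G be a finite subgroup of the orthogonal group of Euclidean ℝ³ such that 0 is the only vector fixed by every element of G. Let v ∈ S² and define F : S² → ℝ by F(w) = Σ_{g∈G} η((1 + ⟨g w, v⟩)/2). Let u ∈ S² satisfy u = −g₀ v for some g₀ ∈ G, and assume that the only vector orthogonal to u fixed by every element of Stab_G(u) = {g ∈ G : g u = u} is 0. Then u is a strict local minimizer of F on S²: there is a neighborhood V of u in S² such that F(u) < F(w) for every w ∈ V with w ≠ u. -/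
/-!
Split `F(w) - F(u)` over `g ∈ G`. The terms with `g u = -v` vanish at `u` and equal
`η(‖w - u‖² / 4)` at `w`, so they grow like `x log (1/x)` in `x = ‖w - u‖² / 4`. The remaining
terms are smooth at `u`: the bound `η t - η s ≥ η' s (t - s) - (t - s)² / s` controls them by a
linear term `⟪w - u, ξ⟫` plus `O(x)`. The vector `ξ` is fixed by the stabilizer of `u`, hence a
multiple of `u`, and `⟪w - u, u⟫ = -2x` on the sphere. Altogether `F(w) - F(u) ≥ η x + K x`,
which is positive for small `x > 0`.
-/

abbrev E3 := EuclideanSpace ℝ (Fin 3)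

open Real Filter Topology
open scoped RealInnerProductSpace

lemma le_negMulLog_sub_negMulLog {s t : ℝ} (hs : 0 < s) (ht : 0 ≤ t) :
    -(log s + 1) * (t - s) - (t - s) ^ 2 / s ≤ negMulLog t - negMulLog s := by
  rcases ht.eq_or_lt with rfl | ht
  · have hsq : (0 - s) ^ 2 / s = s := by field_simp; ring
    rw [hsq, negMulLog_zero, negMulLog]
    linarith
  · have hlog := log_le_sub_one_of_pos (div_pos ht hs)
    rw [log_div ht.ne' hs.ne'] at hlog
    have hgap : negMulLog t - negMulLog s - (-(log s + 1) * (t - s) - (t - s) ^ 2 / s)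
        = t * (t / s - 1 - (log t - log s)) := by
      simp only [negMulLog]
      field_simp
      ring
    nlinarith [mul_nonneg ht.le (sub_nonneg.2 hlog)]

lemma eventually_pos_negMulLog_add_mul (K : ℝ) : ∀ᶠ x in 𝓝[>] (0 : ℝ), 0 < negMulLog x + K * x := by
  filter_upwards [self_mem_nhdsWithin, tendsto_log_nhdsGT_zero.eventually_lt_atBot K]
    with x (hx : 0 < x) hlog
  have : negMulLog x + K * x = x * (K - log x) := by rw [negMulLog]; ring
  rw [this]
  exact mul_pos hx (sub_pos.2 hlog)

section Fidelity

variable {E : Type*} [NormedAddCommGroup E] [InnerProductSpace ℝ E]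

/-- For unit `y`, `v`: the fidelity of the pure qubit states with Bloch vectors `y` and `v`. -/
noncomputable def blochFidelity (y v : E) : ℝ := (1 + ⟪y, v⟫) / 2

variable {y z v : E}

lemma blochFidelity_nonneg (hy : ‖y‖ = 1) (hv : ‖v‖ = 1) : 0 ≤ blochFidelity y v := by
  have := neg_one_le_real_inner_of_norm_eq_one hy hv
  unfold blochFidelity
  linarith

lemma blochFidelity_pos (hy : ‖y‖ = 1) (hv : ‖v‖ = 1) (hyv : y ≠ -v) : 0 < blochFidelity y v := by
  have hne : ⟪y, v⟫ ≠ -1 := fun h => hyv ((inner_eq_neg_one_iff_of_norm_eq_one hy hv).1 h)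
  have := (neg_one_le_real_inner_of_norm_eq_one hy hv).lt_of_ne' hne
  unfold blochFidelity
  linarith

lemma blochFidelity_neg (hy : ‖y‖ = 1) (hz : ‖z‖ = 1) : blochFidelity y (-z) = ‖y - z‖ ^ 2 / 4 := by
  rw [blochFidelity, inner_neg_right, norm_sub_sq_real, hy, hz]
  ring

lemma blochFidelity_apply_of_apply_eq_neg (e : E ≃ₗᵢ[ℝ] E) {u w : E} (hu : ‖u‖ = 1)
    (hw : ‖w‖ = 1) (he : e u = -v) : blochFidelity (e w) v = ‖w - u‖ ^ 2 / 4 := by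
  rw [← neg_neg v, ← he, blochFidelity_neg (by simpa) (by simpa), ← map_sub, e.norm_map]

lemma le_negMulLog_blochFidelity_sub (hy : ‖y‖ = 1) (hz : ‖z‖ = 1) (hv : ‖v‖ = 1)
    (hyv : y ≠ -v) :
    -(log (blochFidelity y v) + 1) * (⟪z - y, v⟫ / 2) - ‖z - y‖ ^ 2 / (4 * blochFidelity y v)
      ≤ negMulLog (blochFidelity z v) - negMulLog (blochFidelity y v) := by
  have hs := blochFidelity_pos hy hv hyv
  have hdiff : blochFidelity z v - blochFidelity y v = ⟪z - y, v⟫ / 2 := by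
    rw [blochFidelity, blochFidelity, inner_sub_left]
    ring
  have hcs : ⟪z - y, v⟫ ^ 2 ≤ ‖z - y‖ ^ 2 := by
    have := abs_real_inner_le_norm (z - y) v
    rw [hv, mul_one] at this
    exact sq_le_sq' (abs_le.1 this).1 (abs_le.1 this).2
  have hquad : (⟪z - y, v⟫ / 2) ^ 2 / blochFidelity y v
      ≤ ‖z - y‖ ^ 2 / (4 * blochFidelity y v) := by
    rw [show (⟪z - y, v⟫ / 2) ^ 2 / blochFidelity y v
        = ⟪z - y, v⟫ ^ 2 / (4 * blochFidelity y v) by ring]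
    gcongr
  have := le_negMulLog_sub_negMulLog hs (blochFidelity_nonneg hz hv)
  rw [hdiff] at this
  linarith

end Fidelity

section Covariant

variable {E : Type*} [NormedAddCommGroup E] [InnerProductSpace ℝ E] {G : Subgroup (E ≃ₗᵢ[ℝ] E)}

lemma eq_inner_smul_of_forall_stabilizer {u ξ : E} (hu : ‖u‖ = 1)
    (hstab : ∀ x : E, ⟪x, u⟫ = 0 →
      (∀ g : G, (g : E ≃ₗᵢ[ℝ] E) u = u → (g : E ≃ₗᵢ[ℝ] E) x = x) → x = 0)
    (hξ : ∀ g : G, (g : E ≃ₗᵢ[ℝ] E) u = u → (g : E ≃ₗᵢ[ℝ] E) ξ = ξ) :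
    ξ = ⟪ξ, u⟫ • u := by
  refine sub_eq_zero.1 (hstab _ ?_ fun g hg => ?_)
  · rw [inner_sub_left, real_inner_smul_left, real_inner_self_eq_norm_sq, hu]
    ring
  · rw [map_sub, map_smul, hξ g hg, hg]

variable [Fintype G]

lemma apply_sum_smul_inv_apply_of_apply_eq (φ : E → ℝ) {u : E} (v : E) {h : G}
    (hh : (h : E ≃ₗᵢ[ℝ] E) u = u) :
    (h : E ≃ₗᵢ[ℝ] E) (∑ g : G, φ ((g : E ≃ₗᵢ[ℝ] E) u) • ((g⁻¹ : G) : E ≃ₗᵢ[ℝ] E) v)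
      = ∑ g : G, φ ((g : E ≃ₗᵢ[ℝ] E) u) • ((g⁻¹ : G) : E ≃ₗᵢ[ℝ] E) v := by
  have hinv : ((h⁻¹ : G) : E ≃ₗᵢ[ℝ] E) u = u := (LinearIsometryEquiv.symm_apply_eq _).2 hh.symm
  simp only [map_sum, map_smul]
  refine Fintype.sum_equiv (Equiv.mulRight h⁻¹) _ _ fun g => ?_
  have hu : ((g * h⁻¹ : G) : E ≃ₗᵢ[ℝ] E) u = (g : E ≃ₗᵢ[ℝ] E) u :=
    congrArg (g : E ≃ₗᵢ[ℝ] E) hinv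
  simp only [Equiv.coe_mulRight, hu, mul_inv_rev, inv_inv]
  rfl

variable (G) in
noncomputable def covariantEntropy (v w : E) : ℝ :=
  ∑ g : G, negMulLog (blochFidelity ((g : E ≃ₗᵢ[ℝ] E) w) v)

open scoped Classical in
lemma negMulLog_le_sum_negMulLog_sub {u v w : E} (hu : ‖u‖ = 1) (hw : ‖w‖ = 1)
    (hg₀ : ∃ g₀ : G, u = -((g₀ : E ≃ₗᵢ[ℝ] E) v)) :
    negMulLog (‖w - u‖ ^ 2 / 4) ≤ ∑ g ∈ {g : G | (g : E ≃ₗᵢ[ℝ] E) u = -v},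
      (negMulLog (blochFidelity ((g : E ≃ₗᵢ[ℝ] E) w) v)
        - negMulLog (blochFidelity ((g : E ≃ₗᵢ[ℝ] E) u) v)) := by
  obtain ⟨g₀, hg₀⟩ := hg₀
  have hle : ‖w - u‖ ≤ 2 := (norm_sub_le w u).trans (by rw [hw, hu]; norm_num)
  have hnonneg : 0 ≤ negMulLog (‖w - u‖ ^ 2 / 4) :=
    negMulLog_nonneg (by positivity) (by nlinarith [norm_nonneg (w - u)])
  rw [Finset.sum_congr rfl fun g hg => by
    rw [blochFidelity_apply_of_apply_eq_neg _ hu hw (Finset.mem_filter.1 hg).2,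
      blochFidelity_apply_of_apply_eq_neg _ hu hu (Finset.mem_filter.1 hg).2]]
  simpa using Finset.single_le_sum (fun _ _ => hnonneg) (a := g₀⁻¹) (by simp [hg₀])

open scoped Classical in
lemma exists_mul_le_sum_negMulLog_sub {u v : E} (hv : ‖v‖ = 1) (hu : ‖u‖ = 1)
    (hstab : ∀ x : E, ⟪x, u⟫ = 0 →
      (∀ g : G, (g : E ≃ₗᵢ[ℝ] E) u = u → (g : E ≃ₗᵢ[ℝ] E) x = x) → x = 0) :
    ∃ K : ℝ, ∀ w : E, ‖w‖ = 1 → K * (‖w - u‖ ^ 2 / 4) ≤ ∑ g ∈ {g : G | (g : E ≃ₗᵢ[ℝ] E) u ≠ -v},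
      (negMulLog (blochFidelity ((g : E ≃ₗᵢ[ℝ] E) w) v)
        - negMulLog (blochFidelity ((g : E ≃ₗᵢ[ℝ] E) u) v)) := by
  set S : Finset G := {g | (g : E ≃ₗᵢ[ℝ] E) u ≠ -v}
  set s : G → ℝ := fun g => blochFidelity ((g : E ≃ₗᵢ[ℝ] E) u) v
  set ξ : E := ∑ g ∈ S, (log (s g) + 1) • ((g⁻¹ : G) : E ≃ₗᵢ[ℝ] E) v
  have hξ : ξ = ⟪ξ, u⟫ • u := by
    refine eq_inner_smul_of_forall_stabilizer hu hstab fun h hh => ?_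
    simpa only [ξ, S, s, Finset.sum_filter, ite_smul, zero_smul] using
      apply_sum_smul_inv_apply_of_apply_eq
        (fun y => if y ≠ -v then log (blochFidelity y v) + 1 else 0) v hh
  set c := ⟪ξ, u⟫
  refine ⟨c - ∑ g ∈ S, 1 / s g, fun w hw => ?_⟩
  have htangent : ∀ g ∈ S,
      -(1 / 2) * ((log (s g) + 1) * ⟪w - u, ((g⁻¹ : G) : E ≃ₗᵢ[ℝ] E) v⟫)
        - ‖w - u‖ ^ 2 / 4 * (1 / s g)
      ≤ negMulLog (blochFidelity ((g : E ≃ₗᵢ[ℝ] E) w) v) - negMulLog (s g) := by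
    intro g hg
    have := le_negMulLog_blochFidelity_sub (y := (g : E ≃ₗᵢ[ℝ] E) u) (z := (g : E ≃ₗᵢ[ℝ] E) w)
      (by simpa) (by simpa) hv (Finset.mem_filter.1 hg).2
    rw [← map_sub, LinearIsometryEquiv.norm_map, LinearIsometryEquiv.inner_map_eq_flip] at this
    rw [show ((g⁻¹ : G) : E ≃ₗᵢ[ℝ] E) v = (g : E ≃ₗᵢ[ℝ] E).symm v from rfl]
    convert this using 2 <;> simp only [s] <;> ring
  have hlin : ∑ g ∈ S, (log (s g) + 1) * ⟪w - u, ((g⁻¹ : G) : E ≃ₗᵢ[ℝ] E) v⟫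
      = -2 * c * (‖w - u‖ ^ 2 / 4) := by
    have hsum : ⟪w - u, ξ⟫
        = ∑ g ∈ S, (log (s g) + 1) * ⟪w - u, ((g⁻¹ : G) : E ≃ₗᵢ[ℝ] E) v⟫ := by
      simp only [ξ, inner_sum, real_inner_smul_right]
    rw [← hsum, hξ, real_inner_smul_right, inner_sub_left, real_inner_self_eq_norm_sq,
      norm_sub_sq_real, hw, hu]
    ring
  have hsum := Finset.sum_le_sum htangent
  rw [Finset.sum_sub_distrib, ← Finset.mul_sum, ← Finset.mul_sum, hlin] at hsum
  linarith

theorem exists_covariantEntropy_add_le {u v : E} (hv : ‖v‖ = 1) (hu : ‖u‖ = 1)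
    (hg₀ : ∃ g₀ : G, u = -((g₀ : E ≃ₗᵢ[ℝ] E) v))
    (hstab : ∀ x : E, ⟪x, u⟫ = 0 →
      (∀ g : G, (g : E ≃ₗᵢ[ℝ] E) u = u → (g : E ≃ₗᵢ[ℝ] E) x = x) → x = 0) :
    ∃ K : ℝ, ∀ w : E, ‖w‖ = 1 → covariantEntropy G v u +
      (negMulLog (‖w - u‖ ^ 2 / 4) + K * (‖w - u‖ ^ 2 / 4)) ≤ covariantEntropy G v w := by
  classical
  obtain ⟨K, hK⟩ := exists_mul_le_sum_negMulLog_sub hv hu hstab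
  refine ⟨K, fun w hw => ?_⟩
  have hsplit : covariantEntropy G v w - covariantEntropy G v u
      = ∑ g ∈ {g : G | (g : E ≃ₗᵢ[ℝ] E) u = -v}, (negMulLog (blochFidelity ((g : E ≃ₗᵢ[ℝ] E) w) v)
          - negMulLog (blochFidelity ((g : E ≃ₗᵢ[ℝ] E) u) v))
        + ∑ g ∈ {g : G | (g : E ≃ₗᵢ[ℝ] E) u ≠ -v}, (negMulLog (blochFidelity ((g : E ≃ₗᵢ[ℝ] E) w) v)
          - negMulLog (blochFidelity ((g : E ≃ₗᵢ[ℝ] E) u) v)) := by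
    rw [Finset.sum_filter_add_sum_filter_not, covariantEntropy, covariantEntropy,
      Finset.sum_sub_distrib]
  linarith [negMulLog_le_sum_negMulLog_sub hu hw hg₀, hK w hw]

end Covariant

theorem stmt_9_general (G : Subgroup (E3 ≃ₗᵢ[ℝ] E3)) [Fintype G]
    (v : E3) (hv : ‖v‖ = 1) (u : E3) (hu : ‖u‖ = 1)
    (hg0 : ∃ g₀ : G, u = -((g₀ : E3 ≃ₗᵢ[ℝ] E3) v))
    (hstab : ∀ x : E3, (inner ℝ x u : ℝ) = 0 →
      (∀ g : G, (g : E3 ≃ₗᵢ[ℝ] E3) u = u → (g : E3 ≃ₗᵢ[ℝ] E3) x = x) → x = 0) :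
    ∃ V ∈ nhdsWithin u (Metric.sphere (0 : E3) 1), V ⊆ Metric.sphere (0 : E3) 1 ∧
      ∀ w ∈ V, w ≠ u →
        (∑ g : G, Real.negMulLog ((1 + (inner ℝ ((g : E3 ≃ₗᵢ[ℝ] E3) u) v : ℝ)) / 2)) <
        (∑ g : G, Real.negMulLog ((1 + (inner ℝ ((g : E3 ≃ₗᵢ[ℝ] E3) w) v : ℝ)) / 2)) := by
  obtain ⟨K, hK⟩ := exists_covariantEntropy_add_le hv hu hg0 hstab
  have hdist : Tendsto (fun w => ‖w - u‖ ^ 2 / 4) (𝓝[≠] u) (𝓝[>] 0) := by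
    refine tendsto_nhdsWithin_iff.2 ⟨?_, eventually_nhdsWithin_of_forall fun w hw => ?_⟩
    · have : Continuous fun w : E3 => ‖w - u‖ ^ 2 / 4 := by fun_prop
      simpa using (this.tendsto u).mono_left nhdsWithin_le_nhds
    · have : 0 < ‖w - u‖ := norm_sub_pos_iff.2 hw
      exact show 0 < ‖w - u‖ ^ 2 / 4 by positivity
  have hpos := eventually_nhdsWithin_iff.1 (hdist.eventually (eventually_pos_negMulLog_add_mul K))
  have hV : ∀ᶠ w in 𝓝[Metric.sphere 0 1] u, w ∈ Metric.sphere (0 : E3) 1 ∧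
      (w ≠ u → covariantEntropy G v u < covariantEntropy G v w) := by
    filter_upwards [self_mem_nhdsWithin, mem_nhdsWithin_of_mem_nhds hpos] with w hw hwu
    refine ⟨hw, fun hne => ?_⟩
    linarith [hK w (mem_sphere_zero_iff_norm.1 hw), hwu hne]
  exact ⟨_, hV, fun w hw => hw.1, fun w hw hne => hw.2 hne⟩

/-- Michel-type criterion, part 1: if `u = −g₀v` for some `g₀ ∈ G`, then `u` is a strict
local minimizer on the sphere of the entropy function `F(w) = Σ_{g∈G} η((1+⟨gw,v⟩)/2)`. -/
theorem stmt_9 (G : Subgroup (E3 ≃ₗᵢ[ℝ] E3)) [Fintype G]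
    (hfix : ∀ x : E3, (∀ g : G, (g : E3 ≃ₗᵢ[ℝ] E3) x = x) → x = 0)
    (v : E3) (hv : ‖v‖ = 1) (u : E3) (hu : ‖u‖ = 1)
    (hg0 : ∃ g₀ : G, u = -((g₀ : E3 ≃ₗᵢ[ℝ] E3) v))
    (hstab : ∀ x : E3, (inner ℝ x u : ℝ) = 0 →
      (∀ g : G, (g : E3 ≃ₗᵢ[ℝ] E3) u = u → (g : E3 ≃ₗᵢ[ℝ] E3) x = x) → x = 0) :
    ∃ V ∈ nhdsWithin u (Metric.sphere (0 : E3) 1), V ⊆ Metric.sphere (0 : E3) 1 ∧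
      ∀ w ∈ V, w ≠ u →
        (∑ g : G, Real.negMulLog ((1 + (inner ℝ ((g : E3 ≃ₗᵢ[ℝ] E3) u) v : ℝ)) / 2)) <
        (∑ g : G, Real.negMulLog ((1 + (inner ℝ ((g : E3 ≃ₗᵢ[ℝ] E3) w) v : ℝ)) / 2)) :=
  stmt_9_general G v hv u hu hg0 hstab
end

section
/- Let h : ℝ → ℝ be defined by h(t) = η((1 + t)/2). Let m ≥ 2 and −1 = t₁ < t₂ < ⋯ < t_m = 1, and let p be a real polynomial with deg p ≤ 2m − 3 such that p(t_i) = h(t_i) for all 1 ≤ i ≤ m and p′(t_i) = h′(t_i) for all 1 < i < m. Then p(t) ≤ h(t) for every t ∈ [−1, 1], and p(t) = h(t) for t ∈ [−1, 1] if and only if t ∈ {t₁, …, t_m}. -/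
/-!
Fix `s ∈ (-1, 1)` other than a node. The polynomial `w = (X² - 1) ∏ (X - tᵢ)²`, the product over
the interior nodes, is negative at `s`; choose `c` so that `P = p + c w` agrees with `h` at `s`
too. Then `h - P` vanishes at the `m` nodes and at `s`, and its derivative at the `m - 2` interior
nodes, so Rolle's theorem applied twice yields `2m - 3` zeros of `h'' - P''` in `(-1, 1)`. As
`(1 + x) h''(x) = -1/2`, these are roots of `Q = (X + 1) P'' + 1/2`, a polynomial of degree at most
`2m - 3` whose coefficient of degree `2m - 3` is `c (2m - 2)(2m - 3)`. Hence `Q` is that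
coefficient times `∏ (X - r)`, and at `-1`, where `Q = 1/2` and the number of (negative) factors
is odd, this forces `c < 0`, i.e. `h(s) - p(s) = c w(s) > 0`.
-/

open Polynomial Set Filter
open scoped Finset Topology

theorem exists_finset_deriv_eq_zero {f : ℝ → ℝ} {s : Set ℝ} (hs : s.OrdConnected)
    (hf : ContinuousOn f s) {Z : Finset ℝ} (hZ : ↑Z ⊆ s) (h0 : ∀ x ∈ Z, f x = 0) :
    ∃ Z' : Finset ℝ, #Z - 1 ≤ #Z' ∧ Disjoint Z' Z ∧
      ∀ c ∈ Z', deriv f c = 0 ∧ ∃ u ∈ Z, ∃ v ∈ Z, c ∈ Ioo u v := by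
  have rolle : ∀ u ∈ Z, ∀ v ∈ Z, u < v → ∃ c ∈ Ioo u v, deriv f c = 0 :=
    fun u hu v hv huv => exists_deriv_eq_zero huv (hf.mono (hs.out (hZ hu) (hZ hv)))
      (by rw [h0 u hu, h0 v hv])
  -- A Rolle point for each pair `u < v` in `Z`; interleaving keeps `#Z - 1` of them outside `Z`.
  choose! g hg using rolle
  set T := ((Z ×ˢ Z).filter fun q => q.1 < q.2).image fun q => g q.1 q.2
  have interleaved := Finset.card_le_sdiff_of_interleaved (s := Z) (t := T)
    fun u hu v hv huv _ =>
      ⟨g u v, Finset.mem_image.mpr ⟨(u, v), by simp [hu, hv, huv], rfl⟩, (hg u hu v hv huv).1⟩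
  refine ⟨T \ Z, by omega, Finset.sdiff_disjoint, fun c hc => ?_⟩
  obtain ⟨⟨u, v⟩, huv, rfl⟩ := Finset.mem_image.mp (Finset.mem_sdiff.mp hc).1
  simp only [Finset.mem_filter, Finset.mem_product] at huv
  obtain ⟨⟨hu, hv⟩, huv⟩ := huv
  exact ⟨(hg u hu v hv huv).2, u, hu, v, hv, (hg u hu v hv huv).1⟩

theorem exists_finset_deriv_deriv_eq_zero {f : ℝ → ℝ} {a b : ℝ}
    (hf : ContinuousOn f (Icc a b)) (hf' : ContinuousOn (deriv f) (Ioo a b))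
    {Z N : Finset ℝ} (hZ : ↑Z ⊆ Icc a b) (hNZ : N ⊆ Z) (hN : ↑N ⊆ Ioo a b)
    (hZ0 : ∀ x ∈ Z, f x = 0) (hN0 : ∀ x ∈ N, deriv f x = 0) :
    ∃ Y : Finset ℝ, #Z + #N - 2 ≤ #Y ∧ ↑Y ⊆ Ioo a b ∧ ∀ y ∈ Y, deriv (deriv f) y = 0 := by
  obtain ⟨Z₁, hcard₁, hdisj, hZ₁⟩ := exists_finset_deriv_eq_zero ordConnected_Icc hf hZ hZ0
  have hZ₁ab : ↑Z₁ ⊆ Ioo a b := fun c hc => by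
    obtain ⟨-, u, hu, v, hv, hc⟩ := hZ₁ c hc
    exact ⟨(hZ hu).1.trans_lt hc.1, hc.2.trans_le (hZ hv).2⟩
  have hY : ↑(Z₁ ∪ N) ⊆ Ioo a b := by
    rw [Finset.coe_union]; exact union_subset hZ₁ab hN
  obtain ⟨Y, hcard, -, hY0⟩ := exists_finset_deriv_eq_zero ordConnected_Ioo hf' hY
    (by simpa [or_imp, forall_and] using ⟨fun x hx => (hZ₁ x hx).1, hN0⟩)
  refine ⟨Y, ?_, fun y hy => ?_, fun y hy => (hY0 y hy).1⟩
  · rw [Finset.card_union_of_disjoint (hdisj.mono_right hNZ)] at hcard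
    omega
  · obtain ⟨-, u, hu, v, hv, hy⟩ := hY0 y hy
    exact ordConnected_Ioo.out (hY hu) (hY hv) (Ioo_subset_Icc_self hy)

theorem eq_C_coeff_mul_prod_X_sub_C {R : Type*} [CommRing R] [IsDomain R] {Q : R[X]}
    {S : Finset R} (hdeg : Q.natDegree ≤ #S) (hroot : ∀ r ∈ S, Q.eval r = 0) :
    Q = C (Q.coeff #S) * ∏ r ∈ S, (X - C r) := by
  rw [← sub_eq_zero]
  refine eq_zero_of_degree_lt_of_eval_finset_eq_zero S ?_ fun r hr => ?_
  · rw [degree_lt_iff_coeff_zero]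
    intro n hn
    have hmonic : (∏ r ∈ S, (X - C r)).Monic := monic_prod_X_sub_C id S
    have hnat : (∏ r ∈ S, (X - C r)).natDegree = #S :=
      natDegree_finsetProd_X_sub_C_eq_card S id
    rw [coeff_sub, coeff_C_mul]
    rcases hn.eq_or_lt with rfl | hlt
    · rw [← hnat, hmonic.coeff_natDegree, hnat, mul_one, sub_self]
    · rw [coeff_eq_zero_of_natDegree_lt (hdeg.trans_lt hlt),
        coeff_eq_zero_of_natDegree_lt (p := ∏ r ∈ S, (X - C r)) (by omega), mul_zero, sub_zero]
  · simp [eval_prod, hroot r hr, Finset.prod_eq_zero hr]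

theorem eval_mul_coeff_neg_of_roots_gt {Q : ℝ[X]} {S : Finset ℝ} {a : ℝ}
    (hdeg : Q.natDegree ≤ #S) (hroot : ∀ r ∈ S, Q.eval r = 0) (ha : ∀ r ∈ S, a < r)
    (hodd : Odd #S) (hQa : Q.eval a ≠ 0) : Q.eval a * Q.coeff #S < 0 := by
  have hfactor : Q.eval a = Q.coeff #S * -∏ r ∈ S, (r - a) := by
    conv_lhs => rw [eq_C_coeff_mul_prod_X_sub_C hdeg hroot]
    simp only [eval_mul, eval_C, eval_prod, eval_sub, eval_X]
    rw [← neg_one_mul, ← hodd.neg_one_pow, ← Finset.prod_neg]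
    simp_rw [neg_sub]
  have hprod : 0 < ∏ r ∈ S, (r - a) := Finset.prod_pos fun r hr => sub_pos.mpr (ha r hr)
  have hcoeff : Q.coeff #S ≠ 0 := fun h => hQa (by rw [hfactor, h, zero_mul])
  rw [hfactor]
  nlinarith [mul_self_pos.mpr hcoeff]

theorem natDegree_X_add_one_mul_derivative_derivative_le {R : Type*} [Semiring R] {P : R[X]}
    {n : ℕ} (hP : P.natDegree ≤ n + 2) :
    ((X + 1) * derivative (derivative P)).natDegree ≤ n + 1 := by
  refine natDegree_mul_le.trans ?_
  have h1 : (X + 1 : R[X]).natDegree ≤ 1 := natDegree_add_le_of_degree_le natDegree_X_le (by simp)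
  have h2 := (natDegree_derivative_le (derivative P)).trans
    (Nat.sub_le_sub_right (natDegree_derivative_le P) 1)
  omega

theorem coeff_X_add_one_mul_derivative_derivative {R : Type*} [CommSemiring R] {P : R[X]}
    {n : ℕ} (hP : P.natDegree ≤ n + 2) :
    ((X + 1) * derivative (derivative P)).coeff (n + 1) =
      P.coeff (n + 2) * ((n + 2) * (n + 1)) := by
  rw [add_mul, one_mul, coeff_add, coeff_X_mul, coeff_derivative, coeff_derivative,
    coeff_derivative, coeff_derivative,
    coeff_eq_zero_of_natDegree_lt (n := n + 1 + 1 + 1) (by omega), zero_mul, zero_mul, add_zero]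
  push_cast
  ring

theorem coeff_neg_of_roots_X_add_one_mul_derivative_derivative_add_half {P : ℝ[X]} {k : ℕ}
    (hP : P.natDegree ≤ 2 * k + 2) {S : Finset ℝ} (hS : #S = 2 * k + 1) (hS1 : ∀ r ∈ S, -1 < r)
    (hroot : ∀ r ∈ S, ((X + 1) * derivative (derivative P) + C (1 / 2)).eval r = 0) :
    P.coeff (2 * k + 2) < 0 := by
  set Q := (X + 1) * derivative (derivative P) + C (1 / 2)
  have hQdeg : Q.natDegree ≤ #S :=
    (natDegree_add_C).le.trans (hS ▸ natDegree_X_add_one_mul_derivative_derivative_le hP)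
  have hQcoeff : Q.coeff #S = P.coeff (2 * k + 2) * ((2 * k + 2) * (2 * k + 1)) := by
    rw [coeff_add, coeff_C, hS, if_neg (by omega), add_zero,
      coeff_X_add_one_mul_derivative_derivative hP]
    push_cast
    ring
  have hQ : Q.eval (-1) = 1 / 2 := by simp [Q]
  have hsign := eval_mul_coeff_neg_of_roots_gt hQdeg hroot hS1 (hS ▸ odd_two_mul_add_one k)
    (by rw [hQ]; norm_num)
  rw [hQ, hQcoeff] at hsign
  have hpos : (0 : ℝ) < (2 * k + 2) * (2 * k + 1) := by positivity
  nlinarith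

noncomputable def nodalPoly (N : Finset ℝ) : ℝ[X] := (X ^ 2 - 1) * (∏ x ∈ N, (X - C x)) ^ 2

theorem monic_X_sq_sub_one : (X ^ 2 - 1 : ℝ[X]).Monic := by
  simpa using monic_X_pow_sub_C (1 : ℝ) two_ne_zero

theorem nodalPoly_monic (N : Finset ℝ) : (nodalPoly N).Monic :=
  monic_X_sq_sub_one.mul ((monic_prod_X_sub_C id N).pow 2)

theorem natDegree_nodalPoly (N : Finset ℝ) : (nodalPoly N).natDegree = 2 * #N + 2 := by
  have hprod : (∏ x ∈ N, (X - C x)).Monic := monic_prod_X_sub_C id N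
  rw [nodalPoly, monic_X_sq_sub_one.natDegree_mul (hprod.pow 2),
    natDegree_pow, natDegree_finsetProd_X_sub_C_eq_card]
  have hsq : (X ^ 2 - 1 : ℝ[X]).natDegree = 2 := by
    simpa using natDegree_X_pow_sub_C (n := 2) (r := (1 : ℝ))
  omega

theorem eval_nodalPoly_eq_zero {N : Finset ℝ} {x : ℝ} (hx : x ∈ insert (-1) (insert 1 N)) :
    (nodalPoly N).eval x = 0 := by
  rcases Finset.mem_insert.mp hx with rfl | hx
  · simp [nodalPoly]
  rcases Finset.mem_insert.mp hx with rfl | hx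
  · simp [nodalPoly]
  · simp [nodalPoly, eval_prod, Finset.prod_eq_zero hx]

theorem eval_derivative_nodalPoly_eq_zero {N : Finset ℝ} {x : ℝ} (hx : x ∈ N) :
    (derivative (nodalPoly N)).eval x = 0 := by
  have hroot : (∏ y ∈ N, (X - C y)).eval x = 0 := by simp [eval_prod, Finset.prod_eq_zero hx]
  simp [nodalPoly, derivative_mul, derivative_pow, hroot]

theorem eval_nodalPoly_neg {N : Finset ℝ} {s : ℝ} (hs : s ∈ Ioo (-1) 1) (hsN : s ∉ N) :
    (nodalPoly N).eval s < 0 := by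
  have hprod : (∏ x ∈ N, (s - x)) ≠ 0 :=
    Finset.prod_ne_zero_iff.mpr fun x hx => sub_ne_zero.mpr (ne_of_mem_of_not_mem hx hsN).symm
  simp only [nodalPoly, eval_mul, eval_pow, eval_sub, eval_X, eval_one, eval_prod, eval_C]
  have : s ^ 2 - 1 < 0 := by nlinarith [hs.1, hs.2]
  exact mul_neg_of_neg_of_pos this (by positivity)

noncomputable def negMulLogHalf (x : ℝ) : ℝ := Real.negMulLog ((1 + x) / 2)

theorem continuous_negMulLogHalf : Continuous negMulLogHalf :=
  Real.continuous_negMulLog.comp (by fun_prop)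

theorem hasDerivAt_one_add_div_two (x : ℝ) : HasDerivAt (fun y : ℝ => (1 + y) / 2) (1 / 2) x := by
  simpa using ((hasDerivAt_id x).const_add 1).div_const 2

theorem hasDerivAt_negMulLogHalf {x : ℝ} (hx : -1 < x) :
    HasDerivAt negMulLogHalf (-(Real.log ((1 + x) / 2) + 1) / 2) x :=
  ((Real.hasDerivAt_negMulLog (by linarith : (1 + x) / 2 ≠ 0)).comp x
    (hasDerivAt_one_add_div_two x)).congr_deriv (by ring)

theorem hasDerivAt_deriv_negMulLogHalf {x : ℝ} (hx : -1 < x) :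
    HasDerivAt (deriv negMulLogHalf) (-1 / (2 * (1 + x))) x := by
  have hderiv : deriv negMulLogHalf =ᶠ[𝓝 x] fun y => -(Real.log ((1 + y) / 2) + 1) / 2 := by
    filter_upwards [Ioi_mem_nhds hx] with y hy using (hasDerivAt_negMulLogHalf hy).deriv
  refine HasDerivAt.congr_of_eventuallyEq ?_ hderiv
  refine ((((Real.hasDerivAt_log (by linarith : (1 + x) / 2 ≠ 0)).comp x
    (hasDerivAt_one_add_div_two x)).add_const 1).neg.div_const 2).congr_deriv ?_
  field_simp

theorem hasDerivAt_negMulLogHalf_sub_eval (P : ℝ[X]) {x : ℝ} (hx : -1 < x) :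
    HasDerivAt (fun y => negMulLogHalf y - P.eval y)
      (deriv negMulLogHalf x - (derivative P).eval x) x := by
  rw [(hasDerivAt_negMulLogHalf hx).deriv]
  exact (hasDerivAt_negMulLogHalf hx).sub (P.hasDerivAt x)

theorem hasDerivAt_deriv_negMulLogHalf_sub_eval (P : ℝ[X]) {x : ℝ} (hx : -1 < x) :
    HasDerivAt (deriv fun y => negMulLogHalf y - P.eval y)
      (-1 / (2 * (1 + x)) - (derivative (derivative P)).eval x) x := by
  have hderiv : (deriv fun y => negMulLogHalf y - P.eval y) =ᶠ[𝓝 x]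
      fun y => deriv negMulLogHalf y - (derivative P).eval y := by
    filter_upwards [Ioi_mem_nhds hx] with y hy
    exact (hasDerivAt_negMulLogHalf_sub_eval P hy).deriv
  exact ((hasDerivAt_deriv_negMulLogHalf hx).sub
    ((derivative P).hasDerivAt x)).congr_of_eventuallyEq hderiv

theorem coe_insert_neg_one_insert_one_subset_Icc {N : Finset ℝ} (hN : ↑N ⊆ Ioo (-1 : ℝ) 1) :
    (↑(insert (-1) (insert 1 N)) : Set ℝ) ⊆ Icc (-1) 1 := by
  simp only [Finset.coe_insert]
  exact insert_subset (by norm_num) (insert_subset (by norm_num) (hN.trans Ioo_subset_Icc_self))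

theorem card_insert_neg_one_insert_one {N : Finset ℝ} (hN : ↑N ⊆ Ioo (-1 : ℝ) 1) :
    #(insert (-1) (insert 1 N)) = #N + 2 := by
  have h1 : (1 : ℝ) ∉ N := fun h => lt_irrefl _ (hN h).2
  have hm1 : (-1 : ℝ) ∉ insert 1 N := by
    rw [Finset.mem_insert, not_or]
    exact ⟨by norm_num, fun h => lt_irrefl _ (hN h).1⟩
  rw [Finset.card_insert_of_notMem hm1, Finset.card_insert_of_notMem h1]

theorem eval_X_add_one_mul_derivative_derivative_add_half_eq_zero (P : ℝ[X]) {r : ℝ}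
    (hr : -1 < r) (h : deriv (deriv fun y => negMulLogHalf y - P.eval y) r = 0) :
    ((X + 1) * derivative (derivative P) + C (1 / 2)).eval r = 0 := by
  rw [(hasDerivAt_deriv_negMulLogHalf_sub_eval P hr).deriv] at h
  have : 1 + r ≠ 0 := by linarith
  simp only [eval_add, eval_mul, eval_X, eval_one, eval_C]
  field_simp at h
  linarith

theorem eval_lt_negMulLogHalf {N : Finset ℝ} (hN : ↑N ⊆ Ioo (-1 : ℝ) 1) {p : ℝ[X]}
    (hdeg : p.natDegree ≤ 2 * #N + 1)
    (hval : ∀ x ∈ insert (-1) (insert 1 N), p.eval x = negMulLogHalf x)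
    (hder : ∀ x ∈ N, (derivative p).eval x = deriv negMulLogHalf x)
    {s : ℝ} (hs : s ∈ Ioo (-1) 1) (hsN : s ∉ N) : p.eval s < negMulLogHalf s := by
  have hws : (nodalPoly N).eval s < 0 := eval_nodalPoly_neg hs hsN
  set c := (negMulLogHalf s - p.eval s) / (nodalPoly N).eval s
  suffices hc : c < 0 by
    have : negMulLogHalf s - p.eval s = c * (nodalPoly N).eval s :=
      (div_mul_cancel₀ _ hws.ne).symm
    nlinarith [mul_pos_of_neg_of_neg hc hws]
  set P := p + C c * nodalPoly N
  set F := fun y => negMulLogHalf y - P.eval y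
  have hsN' : ↑(insert s N) ⊆ Ioo (-1 : ℝ) 1 := by
    rw [Finset.coe_insert]; exact insert_subset hs hN
  have hF0 : ∀ x ∈ insert (-1) (insert 1 (insert s N)), F x = 0 := by
    intro x hx
    by_cases hxs : x = s
    · subst hxs
      simp only [F, P, eval_add, eval_mul, eval_C, c, div_mul_cancel₀ _ hws.ne]
      ring
    have hx : x ∈ insert (-1) (insert 1 N) := by simpa [hxs] using hx
    simp only [F, P, eval_add, eval_mul, eval_C, hval x hx, eval_nodalPoly_eq_zero hx]
    ring
  have hF'0 : ∀ x ∈ N, deriv F x = 0 := by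
    intro x hx
    rw [(hasDerivAt_negMulLogHalf_sub_eval P (hN hx).1).deriv]
    simp [P, eval_derivative_nodalPoly_eq_zero hx, hder x hx]
  have hF'c : ContinuousOn (deriv F) (Ioo (-1) 1) := fun x hx =>
    (hasDerivAt_deriv_negMulLogHalf_sub_eval P hx.1).continuousAt.continuousWithinAt
  obtain ⟨Y, hYcard, hY, hY0⟩ := exists_finset_deriv_deriv_eq_zero
    (continuous_negMulLogHalf.sub P.continuous).continuousOn hF'c
    (coe_insert_neg_one_insert_one_subset_Icc hsN') (by intro x hx; simp [hx]) hN hF0 hF'0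
  rw [card_insert_neg_one_insert_one hsN', Finset.card_insert_of_notMem hsN] at hYcard
  obtain ⟨S, hSY, hS⟩ := Finset.exists_subset_card_eq (s := Y) (n := 2 * #N + 1) (by omega)
  have hPdeg : P.natDegree ≤ 2 * #N + 2 :=
    natDegree_add_le_of_degree_le (hdeg.trans (by omega))
      ((natDegree_C_mul_le _ _).trans (natDegree_nodalPoly N).le)
  have hPcoeff : P.coeff (2 * #N + 2) = c := by
    rw [coeff_add, coeff_C_mul, coeff_eq_zero_of_natDegree_lt (by omega), ← natDegree_nodalPoly,
      (nodalPoly_monic N).coeff_natDegree, zero_add, mul_one]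
  rw [← hPcoeff]
  exact coeff_neg_of_roots_X_add_one_mul_derivative_derivative_add_half hPdeg hS
    (fun r hr => (hY (hSY hr)).1) fun r hr =>
      eval_X_add_one_mul_derivative_derivative_add_half_eq_zero P (hY (hSY hr)).1 (hY0 r (hSY hr))

/-- The Hermite interpolant `p` of `h(t) = η((1+t)/2)` at nodes
`−1 = t₁ < … < t_m = 1` (simple nodes at `±1`, double nodes at interior points),
of degree at most `2m−3`, bounds `h` from below on `[−1,1]`, with equality exactly
at the nodes. -/
theorem stmt_12 (m : ℕ) (hm : 2 ≤ m) (t : Fin m → ℝ) (ht : StrictMono t)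
    (ht0 : t ⟨0, by omega⟩ = -1) (htm : t ⟨m - 1, by omega⟩ = 1)
    (p : Polynomial ℝ) (hdeg : p.natDegree ≤ 2 * m - 3)
    (hval : ∀ i : Fin m, p.eval (t i) = Real.negMulLog ((1 + t i) / 2))
    (hder : ∀ i : Fin m, 0 < (i : ℕ) → (i : ℕ) < m - 1 →
      (Polynomial.derivative p).eval (t i) =
        deriv (fun s : ℝ => Real.negMulLog ((1 + s) / 2)) (t i)) :
    ∀ s ∈ Set.Icc (-1 : ℝ) 1,
      p.eval s ≤ Real.negMulLog ((1 + s) / 2) ∧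
      (p.eval s = Real.negMulLog ((1 + s) / 2) ↔ ∃ i, s = t i) := by
  set i₀ : Fin m := ⟨0, by omega⟩
  set i₁ : Fin m := ⟨m - 1, by omega⟩
  set N := (Finset.Ioo i₀ i₁).image t
  have hN : ↑N ⊆ Ioo (-1 : ℝ) 1 := by
    rw [Finset.coe_image, Finset.coe_Ioo, ← ht0, ← htm]
    exact ht.image_Ioo_subset
  have hcard : #N = m - 2 := by
    rw [Finset.card_image_of_injective _ ht.injective, Fin.card_Ioo]
    simp only [i₀, i₁]
    omega
  have hval' : ∀ x ∈ insert (-1) (insert 1 N), p.eval x = negMulLogHalf x := by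
    simp only [Finset.mem_insert, N, Finset.mem_image]
    rintro x (rfl | rfl | ⟨i, -, rfl⟩)
    exacts [ht0 ▸ hval i₀, htm ▸ hval i₁, hval i]
  have hder' : ∀ x ∈ N, (derivative p).eval x = deriv negMulLogHalf x := by
    simp only [N, Finset.mem_image, Finset.mem_Ioo]
    rintro _ ⟨i, ⟨h0, h1⟩, rfl⟩
    exact hder i h0 h1
  intro s hs
  by_cases hnode : ∃ i, s = t i
  · obtain ⟨i, rfl⟩ := hnode
    exact ⟨(hval i).le, iff_of_true (hval i) ⟨i, rfl⟩⟩
  rw [not_exists] at hnode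
  have hs' : s ∈ Ioo (-1 : ℝ) 1 :=
    ⟨hs.1.lt_of_ne' (ht0 ▸ hnode i₀), hs.2.lt_of_ne (htm ▸ hnode i₁)⟩
  have hsN : s ∉ N := fun h => by
    obtain ⟨i, -, hi⟩ := Finset.mem_image.mp h
    exact hnode i hi.symm
  have hlt := eval_lt_negMulLogHalf hN (by omega) hval' hder' hs' hsN
  exact ⟨hlt.le, iff_of_false hlt.ne fun ⟨i, hi⟩ => hnode i hi⟩
end

section
/- The sequence n ↦ ln 2 − (2/n)·Σ_{j=1}^n η(sin²(π j / n)) converges, as n → ∞, to 1 − ln 2. (This is the limit of the informational power of the regular n-gon qubit POVMs.) -/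
/-!
The sum is a right-endpoint Riemann sum, so `(1/n) ∑ η(sin²(πj/n)) → ∫₀¹ η(sin²(πx)) dx`.
Since `η(sin² x) = (cos 2x - 1) log (sin x)`, the integral over `[0, π]` is
`∫ cos 2x log (sin x) - ∫ log (sin x) = -π/2 + π log 2`, and the limit is
`log 2 - 2 (log 2 - 1/2) = 1 - log 2`.
-/

open Filter Real

open MeasureTheory intervalIntegral Topology

theorem norm_smul_sub_integral_le_of_forall_mem_Ioc {E : Type*} [NormedAddCommGroup E]
    [NormedSpace ℝ E] [CompleteSpace E] {f : ℝ → E} {a b C : ℝ} (hab : a ≤ b)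
    (hf : IntervalIntegrable f volume a b) (h : ∀ x ∈ Set.Ioc a b, ‖f b - f x‖ ≤ C) :
    ‖(b - a) • f b - ∫ x in a..b, f x‖ ≤ C * (b - a) := by
  rw [← intervalIntegral.integral_const, ← integral_sub intervalIntegrable_const hf,
    ← abs_of_nonneg (sub_nonneg.2 hab)]
  exact norm_integral_le_of_norm_le_const (by rwa [Set.uIoc_of_le hab])

theorem Finset.sum_Icc_one_eq_sum_range {M : Type*} [AddCommMonoid M] (g : ℕ → M) (n : ℕ) :
    ∑ j ∈ Finset.Icc 1 n, g j = ∑ k ∈ Finset.range n, g (k + 1) := by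
  rw [← Finset.Ico_add_one_right_eq_Icc, Finset.sum_Ico_eq_sum_range, Nat.add_sub_cancel]
  simp only [add_comm]

theorem tendsto_riemannSum_Icc_zero_one {E : Type*} [NormedAddCommGroup E] [NormedSpace ℝ E]
    [CompleteSpace E] {f : ℝ → E} (hf : ContinuousOn f (Set.Icc 0 1)) :
    Tendsto (fun n : ℕ => (n : ℝ)⁻¹ • ∑ j ∈ Finset.Icc 1 n, f (j / n))
      atTop (𝓝 (∫ x in (0:ℝ)..1, f x)) := by
  rw [Metric.tendsto_atTop]
  intro ε hε
  obtain ⟨δ, hδ, hfδ⟩ := Metric.uniformContinuousOn_iff_le.mp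
    (isCompact_Icc.uniformContinuousOn_of_continuous hf) (ε / 2) (half_pos hε)
  obtain ⟨N, hN⟩ := exists_nat_gt δ⁻¹
  refine ⟨N + 1, fun n hn => ?_⟩
  have hn : (0 : ℝ) < n := by exact_mod_cast (by omega : 0 < n)
  have hmesh : (n : ℝ)⁻¹ ≤ δ := by
    rw [inv_le_comm₀ hn hδ]
    exact hN.le.trans (by exact_mod_cast (by omega : N ≤ n))
  set t : ℕ → ℝ := fun k => k / n with ht
  have ht_mem : ∀ k ≤ n, t k ∈ Set.Icc 0 1 := fun k hk =>
    ⟨by positivity, div_le_one_of_le₀ (by exact_mod_cast hk) hn.le⟩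
  have ht_succ : ∀ k, t (k + 1) - t k = (n : ℝ)⁻¹ := fun k => by
    simp only [ht]; push_cast; field_simp; ring
  have hcell_sub : ∀ k < n, Set.uIcc (t k) (t (k + 1)) ⊆ Set.Icc 0 1 := fun k hk =>
    Set.uIcc_subset_Icc (ht_mem k hk.le) (ht_mem (k + 1) hk)
  have hcell : ∀ k ∈ Finset.range n,
      ‖(n : ℝ)⁻¹ • f (t (k + 1)) - ∫ x in t k..t (k + 1), f x‖ ≤ ε / 2 * (n : ℝ)⁻¹ := by
    intro k hk
    rw [Finset.mem_range] at hk
    have hle : t k ≤ t (k + 1) := by linarith [ht_succ k, inv_pos.2 hn]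
    rw [← ht_succ k]
    refine norm_smul_sub_integral_le_of_forall_mem_Ioc hle
      ((hf.mono (hcell_sub k hk)).intervalIntegrable) fun x hx => ?_
    rw [← dist_eq_norm]
    refine hfδ _ (ht_mem (k + 1) hk) _
      (hcell_sub k hk (Set.Icc_subset_uIcc (Set.Ioc_subset_Icc_self hx))) ?_
    rw [Real.dist_eq, abs_of_nonneg (by linarith [hx.2])]
    linarith [hx.1, ht_succ k]
  calc dist ((n : ℝ)⁻¹ • ∑ j ∈ Finset.Icc 1 n, f (j / n)) (∫ x in (0:ℝ)..1, f x)
      = ‖∑ k ∈ Finset.range n, ((n : ℝ)⁻¹ • f (t (k + 1)) - ∫ x in t k..t (k + 1), f x)‖ := by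
        rw [dist_eq_norm, Finset.sum_sub_distrib, ← Finset.smul_sum,
          sum_integral_adjacent_intervals fun k hk => (hf.mono (hcell_sub k hk)).intervalIntegrable,
          Finset.sum_Icc_one_eq_sum_range]
        simp [ht, hn.ne']
    _ ≤ ∑ _k ∈ Finset.range n, ε / 2 * (n : ℝ)⁻¹ := norm_sum_le_of_le _ hcell
    _ = ε / 2 := by rw [Finset.sum_const, Finset.card_range, nsmul_eq_mul]; field_simp
    _ < ε := half_lt_self hε

theorem Real.negMulLog_sin_sq (x : ℝ) :
    negMulLog (sin x ^ 2) = cos (2 * x) * log (sin x) - log (sin x) := by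
  rw [negMulLog, log_pow, cos_two_mul']
  push_cast
  linear_combination (-log (sin x)) * sin_sq_add_cos_sq x

theorem intervalIntegrable_cos_two_mul_mul_log_sin {a b : ℝ} :
    IntervalIntegrable (fun x => cos (2 * x) * log (sin x)) volume a b :=
  intervalIntegrable_log_sin.continuousOn_mul (by fun_prop)

/- The antiderivative comes from integrating by parts with `v = sin x cos x`: the boundary
term `cos x · sin x log (sin x) = -cos x · η(sin x)` vanishes at `0` and `π`, leaving
`-∫ cos² = -π/2`. -/
theorem integral_cos_two_mul_mul_log_sin_zero_pi :
    ∫ x in (0:ℝ)..π, cos (2 * x) * log (sin x) = -(π / 2) := by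
  have hderiv : ∀ x ∈ Set.Ioo 0 π, HasDerivAt
      (fun t => -cos t * negMulLog (sin t) - t / 2 - sin (2 * t) / 4)
      (cos (2 * x) * log (sin x)) x := by
    intro x hx
    have hsin : sin x ≠ 0 := (sin_pos_of_pos_of_lt_pi hx.1 hx.2).ne'
    have h := ((((hasDerivAt_cos x).neg.mul
      ((hasDerivAt_negMulLog hsin).comp x (hasDerivAt_sin x))).sub
      ((hasDerivAt_id x).div_const 2)).sub
      (((hasDerivAt_sin (2 * x)).comp x ((hasDerivAt_id x).const_mul 2)).div_const 4))
    refine h.congr_deriv ?_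
    simp only [Pi.neg_apply, Function.comp_apply, negMulLog, cos_two_mul']
    linear_combination (1 / 2) * sin_sq_add_cos_sq x
  rw [integral_eq_sub_of_hasDerivAt_of_le pi_pos.le (by fun_prop) hderiv
    intervalIntegrable_cos_two_mul_mul_log_sin]
  norm_num [sin_two_pi]

theorem integral_negMulLog_sin_sq_zero_pi :
    ∫ x in (0:ℝ)..π, negMulLog (sin x ^ 2) = π * (log 2 - 1 / 2) := by
  simp_rw [negMulLog_sin_sq]
  rw [integral_sub intervalIntegrable_cos_two_mul_mul_log_sin
      (g := fun x => log (sin x)) intervalIntegrable_log_sin,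
    integral_cos_two_mul_mul_log_sin_zero_pi, integral_log_sin_zero_pi]
  ring

theorem integral_negMulLog_sin_pi_mul_sq_zero_one :
    ∫ x in (0:ℝ)..1, negMulLog (sin (π * x) ^ 2) = log 2 - 1 / 2 := by
  rw [integral_comp_mul_left (fun x => negMulLog (sin x ^ 2)) pi_ne_zero, mul_zero, mul_one,
    integral_negMulLog_sin_sq_zero_pi, smul_eq_mul, inv_mul_cancel_left₀ pi_ne_zero]

/-- The informational power of the regular `n`-gon qubit POVM,
`ln 2 − (2/n)·Σ_{j=1}^n η(sin²(πj/n))`, converges to `1 − ln 2` as `n → ∞`. -/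
theorem stmt_17 :
    Tendsto (fun n : ℕ =>
        Real.log 2 - (2 / (n : ℝ)) *
          ∑ j ∈ Finset.Icc 1 n, Real.negMulLog (Real.sin (Real.pi * j / n) ^ 2))
      atTop (nhds (1 - Real.log 2)) := by
  have hf : Continuous fun x : ℝ => negMulLog (sin (π * x) ^ 2) := by fun_prop
  have hlim := ((tendsto_riemannSum_Icc_zero_one hf.continuousOn).const_mul 2).const_sub (log 2)
  rw [integral_negMulLog_sin_pi_mul_sq_zero_one] at hlim
  convert hlim using 2 with n
  · simp_rw [smul_eq_mul, mul_div_assoc]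
    ring
  · ring
end

section
/- Let σ_1, …, σ_k be a normalized rank-1 POVM on ℂ^d and let U be a unitary d×d complex matrix. For n ≥ 1 define H_n := Σ_{(i_1,…,i_n) ∈ {1,…,k}^n} η( (1/k)·∏_{m=1}^{n−1} (d/k)·Re tr(U σ_{i_m} U* σ_{i_{m+1}}) ). Then the sequence H_n/n converges and lim_{n→∞} H_n/n = (1/k)·Σ_{i=1}^k Σ_{j=1}^k η((d/k)·Re tr(U σ_i U* σ_j)); i.e., the quantum dynamical entropy of U with respect to the POVM exists and is given by this formula. -/
/-!
The outcome strings form a Markov chain with uniform initial distribution and transition weights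
`p a b = (d/k) Re tr(U σ_a U* σ_b)`. Since `Σ_j σ_j = (k/d) I`, `tr σ_j = 1` and `U` is unitary,
`p` is doubly stochastic, so the uniform distribution is stationary. Splitting off the last
outcome and using `η(xy) = y η(x) + x η(y)` gives `H_{n+1} = log k + n h`, where `h` is the
claimed limit, hence `H_{n+1}/(n+1) → h`.
-/

open Finset Real Filter Matrix

section MarkovChain

variable {ι : Type*}

/-- With `μ` uniform and `p a b = (d/k) Re tr(U σ_a U* σ_b)` this is the probability of the
outcome string `i` in the repeated Lüders measurement. -/
def pathWeight (μ : ι → ℝ) (p : ι → ι → ℝ) {n : ℕ} (i : Fin (n + 1) → ι) : ℝ :=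
  μ (i 0) * ∏ m : Fin n, p (i m.castSucc) (i m.succ)

lemma pathWeight_snoc (μ : ι → ℝ) (p : ι → ι → ℝ) {n : ℕ} (i : Fin (n + 1) → ι) (b : ι) :
    pathWeight μ p (Fin.snoc i b : Fin (n + 2) → ι) = pathWeight μ p i * p (i (Fin.last n)) b := by
  rw [pathWeight, pathWeight, Fin.prod_univ_castSucc, ← mul_assoc,
    show (0 : Fin (n + 2)) = Fin.castSucc 0 from rfl]
  simp only [Fin.succ_castSucc, Fin.snoc_castSucc, Fin.succ_last, Fin.snoc_last]

variable [Fintype ι]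

lemma sum_fun_fin_one (f : (Fin 1 → ι) → ℝ) : ∑ i : Fin 1 → ι, f i = ∑ a, f (fun _ => a) :=
  Fintype.sum_equiv (Equiv.funUnique (Fin 1) ι) _ _ fun _ => congrArg f (funext fun j => by
    rw [Fin.fin_one_eq_zero j]; rfl)

lemma sum_fun_fin_succ_snoc {n : ℕ} (f : (Fin (n + 2) → ι) → ℝ) :
    ∑ i : Fin (n + 2) → ι, f i = ∑ i : Fin (n + 1) → ι, ∑ b, f (Fin.snoc i b) := by
  rw [← (Fin.snocEquiv fun _ => ι).sum_comp, Fintype.sum_prod_type_right]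
  rfl

variable {μ : ι → ℝ} {p : ι → ι → ℝ}

lemma sum_pathWeight_mul_last (hμ : ∀ b, ∑ a, μ a * p a b = μ b) (n : ℕ) (f : ι → ℝ) :
    ∑ i : Fin (n + 1) → ι, pathWeight μ p i * f (i (Fin.last n)) = ∑ a, μ a * f a := by
  induction n generalizing f with
  | zero => simp [sum_fun_fin_one, pathWeight]
  | succ n ih =>
    calc ∑ i : Fin (n + 2) → ι, pathWeight μ p i * f (i (Fin.last (n + 1)))
        = ∑ i : Fin (n + 1) → ι, pathWeight μ p i * ∑ b, p (i (Fin.last n)) b * f b := by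
          simp only [sum_fun_fin_succ_snoc, pathWeight_snoc, Fin.snoc_last, mul_sum, mul_assoc]
      _ = ∑ b, μ b * f b := by
          rw [ih fun a => ∑ b, p a b * f b]
          simp only [mul_sum, ← mul_assoc]
          rw [sum_comm]
          simp only [← sum_mul, hμ]

lemma sum_negMulLog_pathWeight (hp : ∀ a, ∑ b, p a b = 1) (hμ : ∀ b, ∑ a, μ a * p a b = μ b)
    (n : ℕ) :
    ∑ i : Fin (n + 1) → ι, negMulLog (pathWeight μ p i)
      = ∑ a, negMulLog (μ a) + n * ∑ a, μ a * ∑ b, negMulLog (p a b) := by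
  induction n with
  | zero => simp [sum_fun_fin_one, pathWeight]
  | succ n ih =>
    calc ∑ i : Fin (n + 2) → ι, negMulLog (pathWeight μ p i)
        = ∑ i : Fin (n + 1) → ι, (negMulLog (pathWeight μ p i)
            + pathWeight μ p i * ∑ b, negMulLog (p (i (Fin.last n)) b)) := by
          simp only [sum_fun_fin_succ_snoc, pathWeight_snoc, negMulLog_mul, sum_add_distrib,
            ← sum_mul, hp, ← mul_sum, one_mul]
      _ = _ := by
          rw [sum_add_distrib, ih, sum_pathWeight_mul_last hμ n fun a => ∑ b, negMulLog (p a b)]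
          push_cast
          ring

lemma sum_negMulLog_pathWeight_uniform (hp : ∀ a, ∑ b, p a b = 1) (hp' : ∀ b, ∑ a, p a b = 1)
    (n : ℕ) :
    ∑ i : Fin (n + 1) → ι, negMulLog (pathWeight (fun _ => 1 / (Fintype.card ι : ℝ)) p i)
      = log (Fintype.card ι) + n * (1 / (Fintype.card ι : ℝ) * ∑ a, ∑ b, negMulLog (p a b)) := by
  have hμ : ∀ b, ∑ a, 1 / (Fintype.card ι : ℝ) * p a b = 1 / (Fintype.card ι : ℝ) := fun b => by
    rw [← mul_sum, hp', mul_one]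
  rw [sum_negMulLog_pathWeight hp hμ, ← mul_sum, sum_const, card_univ, nsmul_eq_mul]
  rcases (Fintype.card ι).eq_zero_or_pos with h | h
  · simp [h]
  · simp [negMulLog, log_inv]
    field_simp

end MarkovChain

section RankOnePOVM

variable {ι n R : Type*} [Fintype ι] [Fintype n] [DecidableEq n] [CommSemiring R]
  {σ : ι → Matrix n n R} {c : R}

lemma sum_trace_mul_of_sum_eq_smul_one (hsum : ∑ j, σ j = c • 1) (A : Matrix n n R) :
    ∑ j, (A * σ j).trace = c * A.trace := by
  rw [← trace_sum, ← mul_sum, hsum, Matrix.mul_smul, Matrix.mul_one, trace_smul, smul_eq_mul]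

variable {U V : Matrix n n R}

lemma sum_trace_conj_mul_right (hsum : ∑ j, σ j = c • 1) (htr : ∀ j, (σ j).trace = 1)
    (hVU : V * U = 1) (a : ι) : ∑ b, (U * σ a * V * σ b).trace = c := by
  rw [sum_trace_mul_of_sum_eq_smul_one hsum, trace_mul_cycle, hVU, Matrix.one_mul, htr, mul_one]

lemma sum_trace_conj_mul_left (hsum : ∑ j, σ j = c • 1) (htr : ∀ j, (σ j).trace = 1)
    (hUV : U * V = 1) (b : ι) : ∑ a, (U * σ a * V * σ b).trace = c := by
  have hcycle : ∀ a, (U * σ a * V * σ b).trace = (V * σ b * U * σ a).trace := fun a => by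
    rw [Matrix.mul_assoc (U * σ a), trace_mul_comm, ← Matrix.mul_assoc]
  simp only [hcycle]
  rw [sum_trace_mul_of_sum_eq_smul_one hsum, trace_mul_cycle, hUV, Matrix.one_mul, htr, mul_one]

end RankOnePOVM

lemma sum_div_mul_re_eq_one {ι : Type*} [Fintype ι] {x y : ℝ} (hx : x ≠ 0) (hy : y ≠ 0)
    {z : ι → ℂ} (hz : ∑ j, z j = (y : ℂ) / x) : ∑ j, x / y * (z j).re = 1 := by
  rw [← mul_sum, ← Complex.re_sum, hz, ← Complex.ofReal_div, Complex.ofReal_re]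
  field_simp

theorem stmt_18_general {d k : ℕ} (hd : 0 < d) (hk : 0 < k)
    (σ : Fin k → Matrix (Fin d) (Fin d) ℂ)
    (htr : ∀ j, (σ j).trace = 1)
    (hsum : ∑ j, σ j = ((k : ℂ) / (d : ℂ)) • 1)
    (U : Matrix (Fin d) (Fin d) ℂ)
    (hU : U * U.conjTranspose = 1) (hU' : U.conjTranspose * U = 1) :
    Filter.Tendsto
      (fun n : ℕ =>
        (∑ i : Fin (n + 1) → Fin k,
            Real.negMulLog ((1 / (k : ℝ)) *
              ∏ m : Fin n, ((d : ℝ) / k) *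
                ((U * σ (i m.castSucc) * U.conjTranspose * σ (i m.succ)).trace).re))
          / (n + 1 : ℝ))
      Filter.atTop
      (nhds ((1 / (k : ℝ)) * ∑ i, ∑ j,
        Real.negMulLog (((d : ℝ) / k) *
          ((U * σ i * U.conjTranspose * σ j).trace).re))) := by
  have hd0 : (d : ℝ) ≠ 0 := by positivity
  have hk0 : (k : ℝ) ≠ 0 := by positivity
  set p : Fin k → Fin k → ℝ := fun a b => (d / k : ℝ) * (U * σ a * Uᴴ * σ b).trace.re
  have hp : ∀ a, ∑ b, p a b = 1 := fun a => sum_div_mul_re_eq_one hd0 hk0 <| by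
    simpa only [Complex.ofReal_natCast] using sum_trace_conj_mul_right hsum htr hU' a
  have hp' : ∀ b, ∑ a, p a b = 1 := fun b => sum_div_mul_re_eq_one hd0 hk0 <| by
    simpa only [Complex.ofReal_natCast] using sum_trace_conj_mul_left hsum htr hU b
  have hentropy := sum_negMulLog_pathWeight_uniform hp hp'
  simp only [Fintype.card_fin] at hentropy
  convert (tendsto_add_mul_div_add_mul_atTop_nhds (log k) 1 _ one_ne_zero).congr fun n => ?_
  · rw [div_one]
  · rw [add_comm (1 : ℝ), one_mul, mul_comm _ (n : ℝ)]
    exact congrArg (· / _) (hentropy n).symm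

/-- The quantum dynamical entropy of a unitary `U` with respect to a normalized rank-1
POVM exists: with `H_{n+1} = Σ_{strings i of length n+1} η((1/k)·∏_m (d/k)·tr(Uσ_{i_m}U*σ_{i_{m+1}}))`,
the sequence `H_{n+1}/(n+1)` converges to `(1/k)·Σ_{i,j} η((d/k)·tr(Uσ_iU*σ_j))`. -/
theorem stmt_18 {d k : ℕ} (hd : 0 < d) (hk : 0 < k)
    (σ : Fin k → Matrix (Fin d) (Fin d) ℂ)
    (hherm : ∀ j, (σ j).IsHermitian)
    (hproj : ∀ j, σ j * σ j = σ j)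
    (htr : ∀ j, (σ j).trace = 1)
    (hsum : ∑ j, σ j = ((k : ℂ) / (d : ℂ)) • 1)
    (U : Matrix (Fin d) (Fin d) ℂ)
    (hU : U * U.conjTranspose = 1) (hU' : U.conjTranspose * U = 1) :
    Filter.Tendsto
      (fun n : ℕ =>
        (∑ i : Fin (n + 1) → Fin k,
            Real.negMulLog ((1 / (k : ℝ)) *
              ∏ m : Fin n, ((d : ℝ) / k) *
                ((U * σ (i m.castSucc) * U.conjTranspose * σ (i m.succ)).trace).re))
          / (n + 1 : ℝ))
      Filter.atTop
      (nhds ((1 / (k : ℝ)) * ∑ i, ∑ j,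
        Real.negMulLog (((d : ℝ) / k) *
          ((U * σ i * U.conjTranspose * σ j).trace).re))) :=
  stmt_18_general hd hk σ htr hsum U hU hU'
end
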